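/- arXiv:2201.05269 — 7 statements merged into one kernel-verified Lean document; each statement's English description precedes it below -/
import Mathlib

section
/- Let I = (0,∞), p ∈ (1,∞), and w : I → (0,∞) be measurable with ∫_x^∞ w^p < ∞ for every x > 0. If f : I → ℝ is locally integrable near 0 (i.e. ∫_0^x |f| < ∞ for all x ∈ I) and ∫_0^∞ |w(x) ∫_0^x f(t) dt|^p dx < ∞, then there exists a sequence β_k → ∞ with lim_{k→∞} |∫_0^{β_k} f|^p · ∫_{β_k}^∞ w^p = 0. -/
open MeasureTheory Set Filter Topology

/-! If `h x * ∫_{(x,∞)} v ≥ c` for all `x > a`, then for `x > a` we have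
`c v(x) ≤ h(x) v(x) ∫_{(x,∞)} v ≤ h(x) v(x) ∫_{(a,∞)} v`, and integrating over `(a,∞)` gives
`c ≤ ∫_{(a,∞)} h v` whenever the tail of `v` at `a` is positive. Hence for every `a` some `x > a`
has `h x * ∫_{(x,∞)} v` below `∫_{(a,∞)} h v + ε`, and these tails of the integrable function
`h v` tend to `0`. With `h = |∫_0^x f|^p` and `v = w^p`, the function `h v` is the integrand
of the Cesàro-type condition. -/

section TailIntegral

variable {μ : Measure ℝ} {v h : ℝ → ℝ} {a : ℝ}

theorem setIntegral_Ioi_le_of_le (hv : ∀ x ∈ Ioi a, 0 ≤ v x) (hvi : IntegrableOn v (Ioi a) μ)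
    {x : ℝ} (hax : a ≤ x) : ∫ t in Ioi x, v t ∂μ ≤ ∫ t in Ioi a, v t ∂μ :=
  setIntegral_mono_set hvi ((ae_restrict_iff' measurableSet_Ioi).2 (ae_of_all _ hv))
    (Ioi_subset_Ioi hax).eventuallyLE

theorem mul_setIntegral_Ioi_le_of_le_mul_tail (hv : ∀ x ∈ Ioi a, 0 ≤ v x)
    (hh : ∀ x ∈ Ioi a, 0 ≤ h x) (hvi : IntegrableOn v (Ioi a) μ)
    (hhv : IntegrableOn (fun x => h x * v x) (Ioi a) μ) {c : ℝ}
    (hc : ∀ x ∈ Ioi a, c ≤ h x * ∫ t in Ioi x, v t ∂μ) :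
    c * ∫ t in Ioi a, v t ∂μ ≤ (∫ t in Ioi a, v t ∂μ) * ∫ t in Ioi a, h t * v t ∂μ := by
  rw [← integral_const_mul, ← integral_const_mul]
  refine setIntegral_mono_on (hvi.const_mul c) (hhv.const_mul _) measurableSet_Ioi fun x hx => ?_
  have hvx := hv x hx
  have hhx := hh x hx
  calc c * v x ≤ (h x * ∫ t in Ioi x, v t ∂μ) * v x := by gcongr; exact hc x hx
    _ ≤ (h x * ∫ t in Ioi a, v t ∂μ) * v x := by
      gcongr _ * ?_ * _; exact setIntegral_Ioi_le_of_le hv hvi (le_of_lt hx)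
    _ = (∫ t in Ioi a, v t ∂μ) * (h x * v x) := by ring

theorem exists_gt_mul_tail_lt (hv : ∀ x ∈ Ioi a, 0 ≤ v x) (hh : ∀ x ∈ Ioi a, 0 ≤ h x)
    (hvi : IntegrableOn v (Ioi a) μ) (hhv : IntegrableOn (fun x => h x * v x) (Ioi a) μ)
    {ε : ℝ} (hε : 0 < ε) :
    ∃ x > a, h x * ∫ t in Ioi x, v t ∂μ < (∫ t in Ioi a, h t * v t ∂μ) + ε := by
  by_contra! hbig
  have hT : 0 ≤ ∫ t in Ioi a, h t * v t ∂μ :=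
    setIntegral_nonneg measurableSet_Ioi fun x hx => mul_nonneg (hh x hx) (hv x hx)
  have hW : ∫ t in Ioi a, v t ∂μ ≤ 0 := by
    nlinarith [mul_setIntegral_Ioi_le_of_le_mul_tail hv hh hvi hhv hbig]
  have hx : a < a + 1 := lt_add_one a
  have hWx : ∫ t in Ioi (a + 1), v t ∂μ ≤ 0 := (setIntegral_Ioi_le_of_le hv hvi hx.le).trans hW
  nlinarith [hbig (a + 1) hx, hh (a + 1) hx]

theorem exists_seq_tendsto_mul_tail (hv : ∀ x ∈ Ioi a, 0 ≤ v x) (hh : ∀ x ∈ Ioi a, 0 ≤ h x)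
    (hvi : ∀ x ∈ Ioi a, IntegrableOn v (Ioi x) μ)
    (hhv : IntegrableOn (fun x => h x * v x) (Ioi a) μ) :
    ∃ β : ℕ → ℝ, (∀ k, a < β k) ∧ Tendsto β atTop atTop ∧
      Tendsto (fun k => h (β k) * ∫ t in Ioi (β k), v t ∂μ) atTop (𝓝 0) := by
  set s : ℕ → ℝ := fun k => a + (k + 1)
  have hs : ∀ k, a < s k := fun k => by simp only [s]; linarith [k.cast_nonneg (α := ℝ)]
  have hs_top : Tendsto s atTop atTop :=
    tendsto_atTop_add_const_left _ a (tendsto_atTop_add_const_right _ 1 tendsto_natCast_atTop_atTop)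
  have hsub : ∀ k, Ioi (s k) ⊆ Ioi a := fun k => Ioi_subset_Ioi (hs k).le
  have key (k : ℕ) := exists_gt_mul_tail_lt (μ := μ) (fun x hx => hv x (hsub k hx))
    (fun x hx => hh x (hsub k hx)) (hvi _ (hs k)) (hhv.mono_set (hsub k)) k.one_div_pos_of_nat
  choose β hβ hβlt using key
  have htail : Tendsto (fun k => ∫ t in Ioi (s k), h t * v t ∂μ) atTop (𝓝 0) := by
    have hanti : Antitone fun k => Ioi (s k) := fun i j hij =>
      Ioi_subset_Ioi (by simp only [s]; gcongr)
    have hempty : ⋂ k, Ioi (s k) = ∅ := by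
      refine eq_empty_iff_forall_notMem.2 fun x hx => ?_
      obtain ⟨k, hk⟩ := (hs_top.eventually_ge_atTop x).exists
      exact (mem_iInter.1 hx k).not_ge hk
    simpa [hempty] using
      tendsto_setIntegral_of_antitone (fun _ => measurableSet_Ioi) hanti ⟨0, hhv.mono_set (hsub 0)⟩
  refine ⟨β, fun k => (hs k).trans (hβ k), tendsto_atTop_mono (fun k => (hβ k).le) hs_top, ?_⟩
  refine squeeze_zero (fun k => ?_) (fun k => (hβlt k).le)
    (by simpa using htail.add tendsto_one_div_add_atTop_nhds_zero_nat)
  have hβa : Ioi (β k) ⊆ Ioi a := Ioi_subset_Ioi ((hs k).trans (hβ k)).le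
  exact mul_nonneg (hh _ ((hs k).trans (hβ k)))
    (setIntegral_nonneg measurableSet_Ioi fun x hx => hv x (hβa hx))

end TailIntegral

theorem stmt0_general (p : ℝ) (w : ℝ → ℝ)
    (hwpos : ∀ x ∈ Ioi (0:ℝ), 0 < w x)
    (hwint : ∀ x ∈ Ioi (0:ℝ), IntegrableOn (fun t => w t ^ p) (Ioi x))
    (f : ℝ → ℝ)
    (hfCh : IntegrableOn (fun x => |w x * ∫ t in Ioc (0:ℝ) x, f t| ^ p) (Ioi 0)) :
    ∃ β : ℕ → ℝ, (∀ k, 0 < β k) ∧ Tendsto β atTop atTop ∧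
      Tendsto (fun k => |∫ t in Ioc (0:ℝ) (β k), f t| ^ p * ∫ t in Ioi (β k), w t ^ p)
        atTop (nhds 0) := by
  have hwp : ∀ x ∈ Ioi (0:ℝ), 0 ≤ w x ^ p := fun x hx => Real.rpow_nonneg (hwpos x hx).le p
  have hFp : ∀ x ∈ Ioi (0:ℝ), 0 ≤ |∫ t in Ioc (0:ℝ) x, f t| ^ p := fun _ _ => by positivity
  have hprod : IntegrableOn (fun x => |∫ t in Ioc (0:ℝ) x, f t| ^ p * w x ^ p) (Ioi 0) := by
    refine hfCh.congr_fun (fun x hx => ?_) measurableSet_Ioi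
    simp only
    rw [abs_mul, abs_of_pos (hwpos x hx), Real.mul_rpow (hwpos x hx).le (abs_nonneg _), mul_comm]
  exact exists_seq_tendsto_mul_tail hwp hFp hwint hprod

theorem stmt0 (p : ℝ) (hp : 1 < p) (w : ℝ → ℝ) (hwm : Measurable w)
    (hwpos : ∀ x ∈ Ioi (0:ℝ), 0 < w x)
    (hwint : ∀ x ∈ Ioi (0:ℝ), IntegrableOn (fun t => w t ^ p) (Ioi x))
    (f : ℝ → ℝ) (hfm : Measurable f)
    (hfloc : ∀ x ∈ Ioi (0:ℝ), IntegrableOn f (Ioc 0 x))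
    (hfCh : IntegrableOn (fun x => |w x * ∫ t in Ioc (0:ℝ) x, f t| ^ p) (Ioi 0)) :
    ∃ β : ℕ → ℝ, (∀ k, 0 < β k) ∧ Tendsto β atTop atTop ∧
      Tendsto (fun k => |∫ t in Ioc (0:ℝ) (β k), f t| ^ p * ∫ t in Ioi (β k), w t ^ p)
        atTop (nhds 0) :=
  stmt0_general p w hwpos hwint f hfCh
end

section
/- Let I = (0,∞), p ∈ (1,∞), and w : I → (0,∞) be measurable with ∫_x^∞ w^p < ∞ for every x > 0. If f is locally integrable near 0 with ‖f‖ := (∫_0^∞ |w(x) ∫_0^x f|^p dx)^{1/p} < ∞, then there exist sequences α_k ↓ 0 and β_k ↑ ∞ such that the truncations f_n := f·χ_{[α_n, β_n]} satisfy ‖f − f_n‖ → 0 as n → ∞. -/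
/-!
Write `F x = ∫_0^x f` and `W x = ∫_x^∞ w^p`. For `0 < a ≤ b` the primitive of `f - f·χ_[a,b]`
is `F` on `(0,a]`, `F a` on `[a,b]` and `F - F b + F a` beyond `b`, so `‖f - f·χ_[a,b]‖^p` is
bounded by `∫_0^a |wF|^p + ∫_b^∞ |wF|^p` plus multiples of `|F a|^p W a` and `|F b|^p W b`.
The two integrals vanish as `a → 0`, `b → ∞`, so it remains to make `|F|^p W` small at `a` and `b`,
which is possible along suitable sequences. If `ε ≤ |F|^p W` on `(c, ∞)`, integrating
`ε w^p ≤ |F|^p W w^p ≤ W c · |wF|^p` over `(c, ∞)` gives `ε ≤ ∫_c^∞ |wF|^p`, false for large `c`.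
If `ε ≤ |F|^p W` on `(0, d]` with `∫_0^d |wF|^p < ε/2`, the same inequality on `(η, d]` gives
`W η ≤ 2 W d`, hence `|F η|^p W η ≤ 2 W d |F η|^p → 0` as `η → 0`, a contradiction.
-/

open MeasureTheory Set Filter Topology

theorem setIntegral_union_le_add_of_nonneg {X : Type*} [MeasurableSpace X] {μ : Measure X}
    {h : X → ℝ} {s t : Set X} (hst : Disjoint s t) (hs : MeasurableSet s) (ht : MeasurableSet t)
    (h0 : ∀ x ∈ s ∪ t, 0 ≤ h x) :
    ∫ x in s ∪ t, h x ∂μ ≤ ∫ x in s, h x ∂μ + ∫ x in t, h x ∂μ := by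
  by_cases hi : IntegrableOn h (s ∪ t) μ
  · exact (setIntegral_union hst ht hi.left_of_union hi.right_of_union).le
  · rw [integral_undef hi]
    exact add_nonneg (setIntegral_nonneg hs fun x hx => h0 x (Or.inl hx))
      (setIntegral_nonneg ht fun x hx => h0 x (Or.inr hx))

theorem tendsto_setIntegral_Ioc_nhdsGT {g : ℝ → ℝ} {a d : ℝ} (had : a < d)
    (hg : IntegrableOn g (Ioc a d)) :
    Tendsto (fun x => ∫ t in Ioc a x, g t) (𝓝[>] a) (𝓝 0) := by
  have hg' : IntegrableOn g (Icc a d) := (integrableOn_Icc_iff_integrableOn_Ioc (f := g)).2 hg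
  have := (intervalIntegral.continuousOn_primitive hg' a (left_mem_Icc.2 had.le))
  simpa using (this.mono_of_mem_nhdsWithin (Icc_mem_nhdsGT had)).tendsto

theorem tendsto_abs_setIntegral_Ioc_rpow_nhdsGT {f : ℝ → ℝ} {a d p : ℝ} (hp : 0 < p)
    (had : a < d) (hf : IntegrableOn f (Ioc a d)) :
    Tendsto (fun x => |∫ t in Ioc a x, f t| ^ p) (𝓝[>] a) (𝓝 0) := by
  have hF := (tendsto_setIntegral_Ioc_nhdsGT had hf).abs
  rw [abs_zero] at hF
  have h := (Real.continuousAt_rpow_const 0 p (Or.inr hp.le)).tendsto.comp hF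
  rwa [Real.zero_rpow hp.ne'] at h

theorem setIntegral_Ioi_le_setIntegral_Ioi {g : ℝ → ℝ} {a b : ℝ} (hab : a ≤ b)
    (hg : IntegrableOn g (Ioi a)) (hg0 : ∀ x ∈ Ioi a, 0 ≤ g x) :
    ∫ t in Ioi b, g t ≤ ∫ t in Ioi a, g t :=
  setIntegral_mono_set hg ((ae_restrict_iff' measurableSet_Ioi).2 (ae_of_all _ hg0))
    (Ioi_subset_Ioi hab).eventuallyLE

theorem setIntegral_Ioc_add_setIntegral_Ioc {μ : Measure ℝ} {g : ℝ → ℝ} {a b c : ℝ}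
    (hab : a ≤ b) (hbc : b ≤ c) (hg : IntegrableOn g (Ioc a c) μ) :
    ∫ t in Ioc a b, g t ∂μ + ∫ t in Ioc b c, g t ∂μ = ∫ t in Ioc a c, g t ∂μ := by
  rw [← setIntegral_union (Ioc_disjoint_Ioc_of_le le_rfl) measurableSet_Ioc
    (hg.mono_set (Ioc_subset_Ioc_right hbc)) (hg.mono_set (Ioc_subset_Ioc_left hab)),
    Ioc_union_Ioc_eq_Ioc hab hbc]

theorem setIntegral_Ioc_add_setIntegral_Ioi {μ : Measure ℝ} {g : ℝ → ℝ} {a b : ℝ}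
    (hab : a ≤ b) (hg : IntegrableOn g (Ioi a) μ) :
    ∫ t in Ioc a b, g t ∂μ + ∫ t in Ioi b, g t ∂μ = ∫ t in Ioi a, g t ∂μ := by
  rw [← setIntegral_union (Ioc_disjoint_Ioi le_rfl) measurableSet_Ioi
    (hg.mono_set Ioc_subset_Ioi_self) (hg.mono_set (Ioi_subset_Ioi hab)),
    Ioc_union_Ioi_eq_Ioi hab]

theorem abs_add_add_rpow_le {p : ℝ} (hp : 1 ≤ p) (u v z : ℝ) :
    |u + v + z| ^ p ≤ 3 ^ (p - 1) * (|u| ^ p + |v| ^ p + |z| ^ p) := by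
  have h := Real.rpow_sum_le_const_mul_sum_rpow Finset.univ ![u, v, z] hp
  simp only [Fin.sum_univ_three, Finset.card_univ, Fintype.card_fin] at h
  exact le_trans (Real.rpow_le_rpow (abs_nonneg _) (abs_add_three u v z) (by linarith))
    (by simpa using h)

theorem abs_mul_rpow_of_pos {p y : ℝ} (hy : 0 < y) (c : ℝ) :
    |y * c| ^ p = y ^ p * |c| ^ p := by
  rw [abs_mul, abs_of_pos hy, Real.mul_rpow hy.le (abs_nonneg c)]

theorem Filter.exists_seq_tendsto_of_frequently_lt {α : Type*} {l : Filter α}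
    [l.IsCountablyGenerated] {u : α → ℝ} {P : α → Prop}
    (hP : ∀ᶠ x in l, P x) (hu0 : ∀ᶠ x in l, 0 ≤ u x) (hu : ∀ ε > 0, ∃ᶠ x in l, u x < ε) :
    ∃ s : ℕ → α, Tendsto s atTop l ∧ (∀ n, P (s n)) ∧ Tendsto (u ∘ s) atTop (𝓝 0) := by
  obtain ⟨t, ht⟩ := l.exists_antitone_basis
  have : ∀ n : ℕ, ∃ x, (P x ∧ 0 ≤ u x ∧ x ∈ t n) ∧ u x < 1 / (n + 1) := fun n =>
    ((hu _ Nat.one_div_pos_of_nat).and_eventually (hP.and (hu0.and (ht.mem n)))).exists.imp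
      fun _ hx => ⟨hx.2, hx.1⟩
  choose s hs hsε using this
  exact ⟨s, ht.tendsto fun n => (hs n).2.2, fun n => (hs n).1,
    squeeze_zero (fun n => (hs n).2.1) (fun n => (hsε n).le)
      tendsto_one_div_add_atTop_nhds_zero_nat⟩

section Extraction

variable {u : ℝ → ℝ} {P : ℝ → Prop}

theorem exists_strictMono_tendsto_atTop_of_frequently_lt (hP : ∀ᶠ x in atTop, P x)
    (hu0 : ∀ᶠ x in atTop, 0 ≤ u x) (hu : ∀ ε > 0, ∃ᶠ x in atTop, u x < ε) :
    ∃ β : ℕ → ℝ, StrictMono β ∧ Tendsto β atTop atTop ∧ (∀ n, P (β n)) ∧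
      Tendsto (u ∘ β) atTop (𝓝 0) := by
  obtain ⟨s, hs, hsP, hsu⟩ := exists_seq_tendsto_of_frequently_lt hP hu0 hu
  obtain ⟨φ, hφ, hsφ⟩ := strictMono_subseq_of_tendsto_atTop hs
  exact ⟨s ∘ φ, hsφ, hs.comp hφ.tendsto_atTop, fun n => hsP _, hsu.comp hφ.tendsto_atTop⟩

theorem exists_strictAnti_tendsto_nhdsGT_zero_of_frequently_lt
    (hP : ∀ᶠ x in 𝓝[>] 0, P x) (hu0 : ∀ᶠ x in 𝓝[>] 0, 0 ≤ u x)
    (hu : ∀ ε > 0, ∃ᶠ x in 𝓝[>] 0, u x < ε) :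
    ∃ α : ℕ → ℝ, StrictAnti α ∧ Tendsto α atTop (𝓝[>] 0) ∧ (∀ n, 0 < α n ∧ P (α n)) ∧
      Tendsto (u ∘ α) atTop (𝓝 0) := by
  obtain ⟨s, hs, hsP, hsu⟩ :=
    exists_seq_tendsto_of_frequently_lt (eventually_mem_nhdsWithin.and hP) hu0 hu
  obtain ⟨φ, hφ, hsφ⟩ := strictMono_subseq_of_tendsto_atTop (tendsto_inv_nhdsGT_zero.comp hs)
  refine ⟨s ∘ φ, fun m n hmn => ?_, hs.comp hφ.tendsto_atTop, fun n => hsP _,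
    hsu.comp hφ.tendsto_atTop⟩
  exact (inv_lt_inv₀ (hsP _).1 (hsP _).1).1 (hsφ hmn)

end Extraction

section TailWeight

variable {g Φ : ℝ → ℝ} {a ε : ℝ}

theorem mul_setIntegral_le_of_le_mul_tail {s : Set ℝ} (hs : MeasurableSet s) (hsa : s ⊆ Ioi a)
    (hg : IntegrableOn g (Ioi a)) (hg0 : ∀ x ∈ Ioi a, 0 ≤ g x) (hΦ0 : ∀ x ∈ s, 0 ≤ Φ x)
    (hgΦ : IntegrableOn (fun x => g x * Φ x) s)
    (hε : ∀ x ∈ s, ε ≤ Φ x * ∫ t in Ioi x, g t) :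
    ε * ∫ x in s, g x ≤ (∫ t in Ioi a, g t) * ∫ x in s, g x * Φ x := by
  rw [← integral_const_mul, ← integral_const_mul]
  refine setIntegral_mono_on ((hg.mono_set hsa).const_mul ε) (hgΦ.const_mul _) hs fun x hx => ?_
  have hxa : a < x := hsa hx
  calc ε * g x ≤ (Φ x * ∫ t in Ioi x, g t) * g x := by gcongr; exacts [hg0 x hxa, hε x hx]
    _ ≤ (Φ x * ∫ t in Ioi a, g t) * g x :=
      mul_le_mul_of_nonneg_right
        (mul_le_mul_of_nonneg_left (setIntegral_Ioi_le_setIntegral_Ioi hxa.le hg hg0) (hΦ0 x hx))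
        (hg0 x hxa)
    _ = (∫ t in Ioi a, g t) * (g x * Φ x) := by ring

theorem le_setIntegral_Ioi_of_le_mul_tail (hε0 : 0 < ε) (hg : IntegrableOn g (Ioi a))
    (hg0 : ∀ x ∈ Ioi a, 0 ≤ g x) (hΦ0 : ∀ x ∈ Ici a, 0 ≤ Φ x)
    (hgΦ : IntegrableOn (fun x => g x * Φ x) (Ioi a))
    (hε : ∀ x ∈ Ici a, ε ≤ Φ x * ∫ t in Ioi x, g t) :
    ε ≤ ∫ x in Ioi a, g x * Φ x := by
  have hG : 0 < ∫ t in Ioi a, g t :=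
    pos_of_mul_pos_right (hε0.trans_le (hε a (mem_Ici.2 le_rfl))) (hΦ0 a (mem_Ici.2 le_rfl))
  have := mul_setIntegral_le_of_le_mul_tail measurableSet_Ioi subset_rfl hg hg0
    (fun x hx => hΦ0 x (Ioi_subset_Ici_self hx)) hgΦ (fun x hx => hε x (Ioi_subset_Ici_self hx))
  rw [mul_comm] at this
  exact le_of_mul_le_mul_left this hG

theorem frequently_atTop_mul_setIntegral_Ioi_lt (hε0 : 0 < ε) (hg : IntegrableOn g (Ioi a))
    (hg0 : ∀ x ∈ Ioi a, 0 ≤ g x) (hΦ0 : ∀ x ∈ Ioi a, 0 ≤ Φ x)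
    (hgΦ : IntegrableOn (fun x => g x * Φ x) (Ioi a)) :
    ∃ᶠ x in atTop, Φ x * ∫ t in Ioi x, g t < ε := by
  intro h
  simp only [not_lt] at h
  obtain ⟨N, hN⟩ := eventually_atTop.1 h
  obtain ⟨c, hcN, hac, hcε⟩ := ((eventually_ge_atTop N).and ((eventually_gt_atTop a).and
    ((tendsto_integral_Ioi_zero tendsto_id).eventually (gt_mem_nhds hε0)))).exists
  have hca : Ioi c ⊆ Ioi a := Ioi_subset_Ioi hac.le
  refine (le_setIntegral_Ioi_of_le_mul_tail hε0 (hg.mono_set hca) (fun x hx => hg0 x (hca hx))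
    (fun x hx => hΦ0 x (hac.trans_le hx)) (hgΦ.mono_set hca)
    (fun x hx => hN x (hcN.trans hx))).not_gt ?_
  simpa only [id] using hcε

theorem frequently_nhdsGT_mul_setIntegral_Ioi_lt (hε0 : 0 < ε)
    (hg : ∀ x ∈ Ioi a, IntegrableOn g (Ioi x)) (hg0 : ∀ x ∈ Ioi a, 0 ≤ g x)
    (hΦ0 : ∀ x ∈ Ioi a, 0 ≤ Φ x) (hgΦ : IntegrableOn (fun x => g x * Φ x) (Ioi a))
    (hΦ : Tendsto Φ (𝓝[>] a) (𝓝 0)) :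
    ∃ᶠ x in 𝓝[>] a, Φ x * ∫ t in Ioi x, g t < ε := by
  intro h
  simp only [not_lt] at h
  obtain ⟨d₀, had₀, hd₀⟩ := (nhdsGT_basis a).eventually_iff.1 h
  have hhead := tendsto_setIntegral_Ioc_nhdsGT (lt_add_one a) (hgΦ.mono_set Ioc_subset_Ioi_self)
  obtain ⟨d, ⟨had, hdd₀⟩, hdε⟩ := (Eventually.and (Ioo_mem_nhdsGT had₀)
    (hhead.eventually (gt_mem_nhds (half_pos hε0)))).exists
  have hG : ∀ η ∈ Ioo a d, (∫ t in Ioi η, g t) ≤ 2 * ∫ t in Ioi d, g t := by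
    rintro η ⟨haη, hηd⟩
    have hη0 : ∀ x ∈ Ioi η, 0 ≤ g x := fun x hx => hg0 x (haη.trans hx)
    have key := mul_setIntegral_le_of_le_mul_tail measurableSet_Ioc Ioc_subset_Ioi_self
      (hg η haη) hη0 (fun x hx => hΦ0 x (haη.trans hx.1))
      (hgΦ.mono_set fun x hx => haη.trans hx.1)
      (fun x hx => hd₀ ⟨haη.trans hx.1, hx.2.trans_lt hdd₀⟩)
    have hsplit := setIntegral_Ioc_add_setIntegral_Ioi hηd.le (hg η haη)
    have hmono : ∫ x in Ioc η d, g x * Φ x ≤ ∫ x in Ioc a d, g x * Φ x :=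
      setIntegral_mono_set (hgΦ.mono_set Ioc_subset_Ioi_self)
        ((ae_restrict_iff' measurableSet_Ioc).2 (ae_of_all _ fun x hx =>
          mul_nonneg (hg0 x hx.1) (hΦ0 x hx.1)))
        (Ioc_subset_Ioc_left haη.le).eventuallyLE
    have hGη : 0 ≤ ∫ t in Ioi η, g t := setIntegral_nonneg measurableSet_Ioi hη0
    -- with `G x = ∫_x^∞ g`: `ε (G η - G d) ≤ G η ∫_η^d gΦ ≤ G η ε / 2`
    nlinarith
  have hsmall : Tendsto (fun x => Φ x * (2 * ∫ t in Ioi d, g t)) (𝓝[>] a) (𝓝 0) := by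
    simpa using hΦ.mul_const (2 * ∫ t in Ioi d, g t)
  obtain ⟨η, hη, hηε, hεη⟩ := (Eventually.and (Ioo_mem_nhdsGT had)
    ((hsmall.eventually (gt_mem_nhds hε0)).and h)).exists
  have := mul_le_mul_of_nonneg_left (hG η hη) (hΦ0 η hη.1)
  linarith

end TailWeight

section Truncation

variable {p : ℝ} {w f : ℝ → ℝ} {a b x : ℝ}

theorem setIntegral_Ioc_zero_indicator_Icc (ha : 0 ≤ a) :
    ∫ t in Ioc 0 x, (Icc a b).indicator f t = ∫ t in Ioc a (min x b), f t := by
  calc ∫ t in Ioc 0 x, (Icc a b).indicator f t = ∫ t in Ioc 0 x, (Ioc a b).indicator f t :=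
        integral_congr_ae (ae_restrict_of_ae (indicator_ae_eq_of_ae_eq_set Ioc_ae_eq_Icc).symm)
    _ = ∫ t in Ioc a (min x b), f t := by
      rw [setIntegral_indicator measurableSet_Ioc, Ioc_inter_Ioc, max_eq_right ha]

theorem setIntegral_Ioc_zero_sub_indicator_Icc (ha : 0 ≤ a) (hf : IntegrableOn f (Ioc 0 x)) :
    ∫ t in Ioc 0 x, (f t - (Icc a b).indicator f t)
      = (∫ t in Ioc 0 x, f t) - ∫ t in Ioc a (min x b), f t := by
  rw [integral_sub hf (hf.indicator measurableSet_Icc), setIntegral_Ioc_zero_indicator_Icc ha]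

theorem setIntegral_Ioc_zero_sub_indicator_Icc_of_le (ha : 0 ≤ a) (hxa : x ≤ a)
    (hf : IntegrableOn f (Ioc 0 x)) :
    ∫ t in Ioc 0 x, (f t - (Icc a b).indicator f t) = ∫ t in Ioc 0 x, f t := by
  rw [setIntegral_Ioc_zero_sub_indicator_Icc ha hf,
    Ioc_eq_empty (min_le_left x b |>.trans hxa).not_gt, setIntegral_empty, sub_zero]

theorem setIntegral_Ioc_zero_sub_indicator_Icc_of_mem_Icc (ha : 0 ≤ a) (hx : x ∈ Icc a b)
    (hf : IntegrableOn f (Ioc 0 x)) :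
    ∫ t in Ioc 0 x, (f t - (Icc a b).indicator f t) = ∫ t in Ioc 0 a, f t := by
  rw [setIntegral_Ioc_zero_sub_indicator_Icc ha hf, min_eq_left hx.2,
    ← setIntegral_Ioc_add_setIntegral_Ioc ha hx.1 hf, add_sub_cancel_right]

theorem setIntegral_Ioc_zero_sub_indicator_Icc_of_ge (ha : 0 ≤ a) (hab : a ≤ b)
    (hbx : b ≤ x) (hf : IntegrableOn f (Ioc 0 x)) :
    ∫ t in Ioc 0 x, (f t - (Icc a b).indicator f t)
      = (∫ t in Ioc 0 x, f t) - (∫ t in Ioc 0 b, f t) + ∫ t in Ioc 0 a, f t := by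
  rw [setIntegral_Ioc_zero_sub_indicator_Icc ha hf, min_eq_right hbx,
    ← setIntegral_Ioc_add_setIntegral_Ioc ha hab (hf.mono_set (Ioc_subset_Ioc_right hbx))]
  ring

theorem setIntegral_Ioi_sub_truncation_le (hp : 1 ≤ p) (ha : 0 < a) (hab : a ≤ b)
    (hw : ∀ x ∈ Ioi (0:ℝ), 0 < w x) (hwa : IntegrableOn (fun t => w t ^ p) (Ioi a))
    (hf : ∀ x ∈ Ioi (0:ℝ), IntegrableOn f (Ioc 0 x))
    (hH : IntegrableOn (fun x => |w x * ∫ t in Ioc 0 x, f t| ^ p) (Ioi 0)) :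
    ∫ x in Ioi 0, |w x * ∫ t in Ioc 0 x, (f t - (Icc a b).indicator f t)| ^ p
      ≤ (∫ x in Ioc 0 a, |w x * ∫ t in Ioc 0 x, f t| ^ p)
        + |∫ t in Ioc 0 a, f t| ^ p * (∫ t in Ioi a, w t ^ p)
        + 3 ^ (p - 1) * ((∫ x in Ioi b, |w x * ∫ t in Ioc 0 x, f t| ^ p)
          + |∫ t in Ioc 0 b, f t| ^ p * (∫ t in Ioi b, w t ^ p)
          + |∫ t in Ioc 0 a, f t| ^ p * (∫ t in Ioi a, w t ^ p)) := by
  set D : ℝ → ℝ := fun x => |w x * ∫ t in Ioc 0 x, (f t - (Icc a b).indicator f t)| ^ p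
  set H : ℝ → ℝ := fun x => |w x * ∫ t in Ioc 0 x, f t| ^ p
  set Φa := |∫ t in Ioc 0 a, f t| ^ p
  set Φb := |∫ t in Ioc 0 b, f t| ^ p
  have hb : 0 < b := ha.trans_le hab
  have hD0 : ∀ x, 0 ≤ D x := fun x => Real.rpow_nonneg (abs_nonneg _) p
  have hw0 : ∀ x ∈ Ioi a, 0 ≤ w x ^ p := fun x hx => Real.rpow_nonneg (hw x (ha.trans hx)).le p
  have hwb : IntegrableOn (fun t => w t ^ p) (Ioi b) := hwa.mono_set (Ioi_subset_Ioi hab)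
  -- The truncated integrand is not known to be measurable, so only bounds that do not need
  -- integrability of `D` are used.
  have hsplit : ∫ x in Ioi 0, D x
      ≤ (∫ x in Ioc 0 a, D x) + ((∫ x in Ioc a b, D x) + ∫ x in Ioi b, D x) := by
    calc ∫ x in Ioi 0, D x ≤ (∫ x in Ioc 0 a, D x) + ∫ x in Ioi a, D x := by
          rw [← Ioc_union_Ioi_eq_Ioi ha.le]
          exact setIntegral_union_le_add_of_nonneg (Ioc_disjoint_Ioi le_rfl) measurableSet_Ioc
            measurableSet_Ioi fun x _ => hD0 x
      _ ≤ _ := by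
          rw [← Ioc_union_Ioi_eq_Ioi hab]
          gcongr
          exact setIntegral_union_le_add_of_nonneg (Ioc_disjoint_Ioi le_rfl) measurableSet_Ioc
            measurableSet_Ioi fun x _ => hD0 x
  have h₁ : ∫ x in Ioc 0 a, D x = ∫ x in Ioc 0 a, H x :=
    setIntegral_congr_fun measurableSet_Ioc fun x hx => by
      simp only [D, H, setIntegral_Ioc_zero_sub_indicator_Icc_of_le ha.le hx.2 (hf x hx.1)]
  have h₂ : ∫ x in Ioc a b, D x ≤ Φa * ∫ t in Ioi a, w t ^ p := by
    calc ∫ x in Ioc a b, D x = ∫ x in Ioc a b, w x ^ p * Φa :=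
          setIntegral_congr_fun measurableSet_Ioc fun x hx => by
            simp only [D, Φa, setIntegral_Ioc_zero_sub_indicator_Icc_of_mem_Icc ha.le
              (Ioc_subset_Icc_self hx) (hf x (ha.trans hx.1)),
              abs_mul_rpow_of_pos (hw x (ha.trans hx.1))]
      _ = Φa * ∫ x in Ioc a b, w x ^ p := by rw [integral_mul_const, mul_comm]
      _ ≤ Φa * ∫ t in Ioi a, w t ^ p :=
          mul_le_mul_of_nonneg_left (setIntegral_mono_set hwa
            ((ae_restrict_iff' measurableSet_Ioi).2 (ae_of_all _ hw0))
            Ioc_subset_Ioi_self.eventuallyLE) (Real.rpow_nonneg (abs_nonneg _) p)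
  have h₃ : ∫ x in Ioi b, D x ≤ 3 ^ (p - 1) * ((∫ x in Ioi b, H x)
      + Φb * (∫ t in Ioi b, w t ^ p) + Φa * (∫ t in Ioi b, w t ^ p)) := by
    calc ∫ x in Ioi b, D x
        ≤ ∫ x in Ioi b, 3 ^ (p - 1) * (H x + w x ^ p * Φb + w x ^ p * Φa) := by
          refine setIntegral_mono_of_nonneg (fun x _ => hD0 x) (fun x hx => ?_)
            ((((hH.mono_set (Ioi_subset_Ioi hb.le)).add (hwb.mul_const _)).add
              (hwb.mul_const _)).const_mul _)
          have hwx := hw x (hb.trans hx)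
          simp only [D, H, Φa, Φb, setIntegral_Ioc_zero_sub_indicator_Icc_of_ge ha.le hab
            (le_of_lt hx) (hf x (hb.trans hx)), ← abs_mul_rpow_of_pos hwx]
          convert abs_add_add_rpow_le hp (w x * ∫ t in Ioc 0 x, f t)
            (-(w x * ∫ t in Ioc 0 b, f t)) (w x * ∫ t in Ioc 0 a, f t) using 3
          · ring
          · rw [abs_neg]
      _ = 3 ^ (p - 1) * ((∫ x in Ioi b, H x)
            + Φb * (∫ t in Ioi b, w t ^ p) + Φa * (∫ t in Ioi b, w t ^ p)) := by
          have hHb := hH.mono_set (Ioi_subset_Ioi hb.le)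
          rw [integral_const_mul, integral_add (f := fun x => H x + w x ^ p * Φb)
            (hHb.add (hwb.mul_const Φb)) (hwb.mul_const Φa),
            integral_add hHb (hwb.mul_const Φb), integral_mul_const, integral_mul_const,
            mul_comm Φb, mul_comm Φa]
  have hG : Φa * (∫ t in Ioi b, w t ^ p) ≤ Φa * ∫ t in Ioi a, w t ^ p :=
    mul_le_mul_of_nonneg_left (setIntegral_Ioi_le_setIntegral_Ioi hab hwa hw0)
      (Real.rpow_nonneg (abs_nonneg _) p)
  have h3p : (0:ℝ) ≤ 3 ^ (p - 1) := by positivity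
  calc ∫ x in Ioi 0, D x ≤ _ := hsplit
    _ ≤ _ := by rw [h₁]; nlinarith

theorem tendsto_setIntegral_Ioi_sub_truncation (hp : 1 ≤ p) (hw : ∀ x ∈ Ioi (0:ℝ), 0 < w x)
    (hwint : ∀ x ∈ Ioi (0:ℝ), IntegrableOn (fun t => w t ^ p) (Ioi x))
    (hf : ∀ x ∈ Ioi (0:ℝ), IntegrableOn f (Ioc 0 x))
    (hH : IntegrableOn (fun x => |w x * ∫ t in Ioc 0 x, f t| ^ p) (Ioi 0))
    {α β : ℕ → ℝ} (hαβ : ∀ n, α n ≤ β n) (hα0 : ∀ n, 0 < α n) (hα : Tendsto α atTop (𝓝[>] 0))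
    (hβ : Tendsto β atTop atTop)
    (hαΦ : Tendsto (fun n => |∫ t in Ioc 0 (α n), f t| ^ p * ∫ t in Ioi (α n), w t ^ p)
      atTop (𝓝 0))
    (hβΦ : Tendsto (fun n => |∫ t in Ioc 0 (β n), f t| ^ p * ∫ t in Ioi (β n), w t ^ p)
      atTop (𝓝 0)) :
    Tendsto (fun n => ∫ x in Ioi 0,
      |w x * ∫ t in Ioc 0 x, (f t - (Icc (α n) (β n)).indicator f t)| ^ p) atTop (𝓝 0) := by
  have hhead :=
    (tendsto_setIntegral_Ioc_nhdsGT one_pos (hH.mono_set Ioc_subset_Ioi_self)).comp hα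
  have htail : Tendsto (fun n => ∫ x in Ioi (β n), |w x * ∫ t in Ioc 0 x, f t| ^ p)
      atTop (𝓝 0) :=
    tendsto_integral_Ioi_zero hβ
  refine squeeze_zero (fun n => integral_nonneg fun x => Real.rpow_nonneg (abs_nonneg _) p)
    (fun n => setIntegral_Ioi_sub_truncation_le hp (hα0 n) (hαβ n) hw (hwint _ (hα0 n)) hf hH)
    ?_
  simpa using (hhead.add hαΦ).add (((htail.add hβΦ).add hαΦ).const_mul (3 ^ (p - 1)))

end Truncation

theorem stmt1_general (p : ℝ) (hp : 1 < p) (w : ℝ → ℝ)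
    (hwpos : ∀ x ∈ Ioi (0:ℝ), 0 < w x)
    (hwint : ∀ x ∈ Ioi (0:ℝ), IntegrableOn (fun t => w t ^ p) (Ioi x))
    (f : ℝ → ℝ)
    (hfloc : ∀ x ∈ Ioi (0:ℝ), IntegrableOn f (Ioc 0 x))
    (hfCh : IntegrableOn (fun x => |w x * ∫ t in Ioc (0:ℝ) x, f t| ^ p) (Ioi 0)) :
    ∃ α β : ℕ → ℝ, (∀ k, 0 < α k) ∧ (∀ k, α k ≤ β k) ∧
      Antitone α ∧ Monotone β ∧
      Tendsto α atTop (nhds 0) ∧ Tendsto β atTop atTop ∧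
      Tendsto (fun n => (∫ x in Ioi (0:ℝ),
          |w x * ∫ t in Ioc (0:ℝ) x, (f t - (Icc (α n) (β n)).indicator f t)| ^ p) ^ (1/p))
        atTop (nhds 0) := by
  have hp0 : 0 < p := one_pos.trans hp
  set Φ : ℝ → ℝ := fun x => |∫ t in Ioc (0:ℝ) x, f t| ^ p
  have hΦ0 : ∀ x, 0 ≤ Φ x := fun x => Real.rpow_nonneg (abs_nonneg _) p
  have hw0 : ∀ x ∈ Ioi (0:ℝ), 0 ≤ w x ^ p := fun x hx => Real.rpow_nonneg (hwpos x hx).le p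
  have hwΦ : IntegrableOn (fun x => w x ^ p * Φ x) (Ioi 0) :=
    hfCh.congr_fun (fun x hx => abs_mul_rpow_of_pos (hwpos x hx) _) measurableSet_Ioi
  have hu0 : ∀ x ∈ Ioi (0:ℝ), 0 ≤ Φ x * ∫ t in Ioi x, w t ^ p := fun x hx =>
    mul_nonneg (hΦ0 x) (setIntegral_nonneg measurableSet_Ioi fun t ht =>
      hw0 t (mem_Ioi.2 (lt_trans hx ht)))
  obtain ⟨α, hα_anti, hα, hα_mem, hαΦ⟩ := exists_strictAnti_tendsto_nhdsGT_zero_of_frequently_lt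
    (P := (· < 1)) (nhdsWithin_le_nhds (Iio_mem_nhds one_pos))
    (eventually_mem_nhdsWithin.mono hu0) fun ε hε =>
      frequently_nhdsGT_mul_setIntegral_Ioi_lt hε hwint hw0 (fun x _ => hΦ0 x) hwΦ
        (tendsto_abs_setIntegral_Ioc_rpow_nhdsGT hp0 one_pos (hfloc 1 (mem_Ioi.2 one_pos)))
  obtain ⟨β, hβ_mono, hβ, hβ_mem, hβΦ⟩ := exists_strictMono_tendsto_atTop_of_frequently_lt
    (P := (1 < ·)) (eventually_gt_atTop 1) ((eventually_gt_atTop 0).mono hu0) fun ε hε =>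
      frequently_atTop_mul_setIntegral_Ioi_lt hε (hwint 1 (mem_Ioi.2 one_pos))
        (fun x hx => hw0 x (mem_Ioi.2 (one_pos.trans hx))) (fun x _ => hΦ0 x)
        (hwΦ.mono_set (Ioi_subset_Ioi zero_le_one))
  have hαβ : ∀ n, α n ≤ β n := fun n => ((hα_mem n).2.trans (hβ_mem n)).le
  refine ⟨α, β, fun n => (hα_mem n).1, hαβ, hα_anti.antitone, hβ_mono.monotone,
    tendsto_nhds_of_tendsto_nhdsWithin hα, hβ, ?_⟩
  have h := (Real.continuousAt_rpow_const 0 (1 / p) (Or.inr (by positivity))).tendsto.comp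
    (tendsto_setIntegral_Ioi_sub_truncation hp.le hwpos hwint hfloc hfCh hαβ
      (fun n => (hα_mem n).1) hα hβ hαΦ hβΦ)
  rwa [Real.zero_rpow (by positivity)] at h

theorem stmt1 (p : ℝ) (hp : 1 < p) (w : ℝ → ℝ) (hwm : Measurable w)
    (hwpos : ∀ x ∈ Ioi (0:ℝ), 0 < w x)
    (hwint : ∀ x ∈ Ioi (0:ℝ), IntegrableOn (fun t => w t ^ p) (Ioi x))
    (f : ℝ → ℝ) (hfm : Measurable f)
    (hfloc : ∀ x ∈ Ioi (0:ℝ), IntegrableOn f (Ioc 0 x))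
    (hfCh : IntegrableOn (fun x => |w x * ∫ t in Ioc (0:ℝ) x, f t| ^ p) (Ioi 0)) :
    ∃ α β : ℕ → ℝ, (∀ k, 0 < α k) ∧ (∀ k, α k ≤ β k) ∧
      Antitone α ∧ Monotone β ∧
      Tendsto α atTop (nhds 0) ∧ Tendsto β atTop atTop ∧
      Tendsto (fun n => (∫ x in Ioi (0:ℝ),
          |w x * ∫ t in Ioc (0:ℝ) x, (f t - (Icc (α n) (β n)).indicator f t)| ^ p) ^ (1/p))
        atTop (nhds 0) :=
  stmt1_general p hp w hwpos hwint f hfloc hfCh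
end

section
/- Let I = (c,d) ⊂ ℝ, p ∈ (1,∞), w : I → (0,∞) measurable with w^p locally integrable near d, let [a,b] ⊂ I with a < b, and let h ∈ L^1([a,b]). Then for every ε > 0 there exists a measurable function f supported in [a,b] with |f| = |h| on (a,b) and (∫_a^b |w(x) ∫_c^x f(t) dt|^p dx)^{1/p} < ε. -/
/-!
Let `H x = ∫_a^x |h|` and give `|h|` the sign `(-1)^⌊H/δ⌋`, switching sign each time `|h|` has
accumulated another mass `δ`. Then `∫_a^x f = T (H x)`, where `T` is the triangle wave of
height `δ` whose slope is that sign, so the primitive of `f` stays in `[0, δ]`, and the weighted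
norm is at most `δ (∫_a^b w^p)^(1/p)`, which is `< ε` once `δ` is small.
-/

open MeasureTheory Set

noncomputable def altSign (δ u : ℝ) : ℝ := if Even ⌊u / δ⌋ then 1 else -1

/-- The `2δ`-periodic triangle wave with values `0` at even and `δ` at odd multiples of `δ`;
its slope is `altSign δ`. -/
noncomputable def triangleWave (δ u : ℝ) : ℝ :=
  if Even ⌊u / δ⌋ then δ * Int.fract (u / δ) else δ * (1 - Int.fract (u / δ))

section TriangleWave

variable {δ u : ℝ}

lemma abs_altSign : |altSign δ u| = 1 := by
  unfold altSign; split_ifs <;> simp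

lemma measurable_altSign : Measurable (altSign δ) :=
  (Measurable.of_discrete (f := fun k : ℤ => if Even k then (1 : ℝ) else -1)).comp
    (Int.measurable_floor.comp (measurable_id.div_const δ))

lemma triangleWave_nonneg (hδ : 0 ≤ δ) : 0 ≤ triangleWave δ u := by
  unfold triangleWave
  split_ifs
  · exact mul_nonneg hδ (Int.fract_nonneg _)
  · exact mul_nonneg hδ (sub_nonneg.2 (Int.fract_lt_one _).le)

lemma triangleWave_le (hδ : 0 ≤ δ) : triangleWave δ u ≤ δ := by
  unfold triangleWave
  split_ifs
  · exact mul_le_of_le_one_right hδ (Int.fract_lt_one _).le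
  · exact mul_le_of_le_one_right hδ (sub_le_self _ (Int.fract_nonneg _))

lemma Int.floor_div_eq_of_mem_Ico (hδ : 0 < δ) {k : ℤ} (hu : u ∈ Ico (k * δ) ((k + 1) * δ)) :
    ⌊u / δ⌋ = k := by
  rw [Int.floor_eq_iff, le_div_iff₀ hδ, div_lt_iff₀ hδ]
  exact hu

lemma altSign_of_mem_Ico (hδ : 0 < δ) {k : ℤ} (hu : u ∈ Ico (k * δ) ((k + 1) * δ)) :
    altSign δ u = if Even k then 1 else -1 := by
  rw [altSign, Int.floor_div_eq_of_mem_Ico hδ hu]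

lemma triangleWave_of_mem_Icc (hδ : 0 < δ) {k : ℤ} (hu : u ∈ Icc (k * δ) ((k + 1) * δ)) :
    triangleWave δ u = if Even k then u - k * δ else (k + 1) * δ - u := by
  rcases hu.2.lt_or_eq with hlt | rfl
  · have hfl := Int.floor_div_eq_of_mem_Ico hδ ⟨hu.1, hlt⟩
    rw [triangleWave, Int.fract, hfl]
    split_ifs
    · field_simp
    · field_simp; ring
  · have hfl : ⌊((k + 1) * δ) / δ⌋ = k + 1 := by
      rw [mul_div_cancel_right₀ _ hδ.ne']; exact_mod_cast Int.floor_intCast (k + 1)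
    rw [triangleWave, Int.fract, hfl]
    by_cases hk : Even k
    · have : ¬ Even (k + 1) := Int.not_even_iff_odd.2 hk.add_one
      simp only [this, hk, if_false, if_true]
      field_simp; push_cast; ring
    · have : Even (k + 1) := (Int.not_even_iff_odd.1 hk).add_one
      simp only [this, hk, if_false, if_true]
      field_simp; push_cast; ring

end TriangleWave

lemma ContinuousOn.exists_first_eq {H : ℝ → ℝ} {a b u : ℝ} (hab : a ≤ b)
    (hH : ContinuousOn H (Icc a b)) (hu : u ∈ Icc (H a) (H b)) :
    ∃ z ∈ Icc a b, H z = u ∧ ∀ t ∈ Ico a z, H t < u := by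
  set S := Icc a b ∩ H ⁻¹' Ici u
  have hS : IsCompact S :=
    isCompact_Icc.of_isClosed_subset (hH.preimage_isClosed_of_isClosed isClosed_Icc isClosed_Ici)
      inter_subset_left
  obtain ⟨z, ⟨hz, hzu⟩, hmin⟩ := hS.exists_isLeast ⟨b, right_mem_Icc.2 hab, hu.2⟩
  obtain ⟨y, hy, hyu⟩ := intermediate_value_Icc hz.1 (hH.mono (Icc_subset_Icc_right hz.2))
    ⟨hu.1, hzu⟩
  have hyz : y = z := le_antisymm hy.2 (hmin ⟨⟨hy.1, hy.2.trans hz.2⟩, hyu.ge⟩)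
  refine ⟨z, hz, hyz ▸ hyu, fun t ht => not_le.1 fun hut => ?_⟩
  exact not_lt.2 (hmin ⟨⟨ht.1, ht.2.le.trans hz.2⟩, hut⟩) ht.2

section Sawtooth

variable {g : ℝ → ℝ} {a δ : ℝ}

lemma monotone_primitive (hg0 : ∀ t, 0 ≤ g t) (hg : ∀ x y, IntervalIntegrable g volume x y) :
    Monotone fun x => ∫ t in a..x, g t := fun x y hxy => by
  have := intervalIntegral.integral_nonneg (μ := volume) hxy fun t _ => hg0 t
  rwa [← intervalIntegral.integral_interval_sub_left (hg a y) (hg a x), sub_nonneg] at this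

lemma intervalIntegrable_altSign_mul (hg0 : ∀ t, 0 ≤ g t)
    (hg : ∀ x y, IntervalIntegrable g volume x y) (x y : ℝ) :
    IntervalIntegrable (fun t => altSign δ (∫ s in a..t, g s) * g t) volume x y := by
  refine (hg x y).mono_fun' ?_ (ae_of_all _ fun t => ?_)
  · exact (Measurable.aestronglyMeasurable (measurable_altSign.comp
      (intervalIntegral.continuous_primitive hg a).measurable)).mul
      (hg x y).def'.aestronglyMeasurable
  · simp only [Real.norm_eq_abs, abs_mul, abs_altSign, one_mul, abs_of_nonneg (hg0 t), le_refl]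

/-- With `H` the primitive of `g`, the difference `∫_a^· altSign δ (H t) * g t - triangleWave δ ∘ H`
is constant across a block of `H`. -/
lemma integral_altSign_mul_sub_triangleWave_eq (hg0 : ∀ t, 0 ≤ g t)
    (hg : ∀ x y, IntervalIntegrable g volume x y) (hδ : 0 < δ) {x y : ℝ} (hxy : x ≤ y) {k : ℤ}
    (hx : (∫ s in a..x, g s) ∈ Icc (k * δ) ((k + 1) * δ))
    (hy : (∫ s in a..y, g s) ∈ Icc (k * δ) ((k + 1) * δ))
    (hk : ∀ t ∈ Ioo x y, (∫ s in a..t, g s) ∈ Ico (k * δ) ((k + 1) * δ)) :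
    (∫ t in a..y, altSign δ (∫ s in a..t, g s) * g t) - triangleWave δ (∫ s in a..y, g s) =
      (∫ t in a..x, altSign δ (∫ s in a..t, g s) * g t) - triangleWave δ (∫ s in a..x, g s) := by
  have hF : (∫ t in a..y, altSign δ (∫ s in a..t, g s) * g t) -
      ∫ t in a..x, altSign δ (∫ s in a..t, g s) * g t =
      (if Even k then 1 else -1) * ((∫ s in a..y, g s) - ∫ s in a..x, g s) := by
    rw [intervalIntegral.integral_interval_sub_left (intervalIntegrable_altSign_mul hg0 hg a y)
        (intervalIntegrable_altSign_mul hg0 hg a x),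
      intervalIntegral.integral_interval_sub_left (hg a y) (hg a x),
      intervalIntegral.integral_of_le hxy, intervalIntegral.integral_of_le hxy,
      integral_Ioc_eq_integral_Ioo, integral_Ioc_eq_integral_Ioo, ← integral_const_mul]
    exact setIntegral_congr_fun measurableSet_Ioo fun t ht => by
      rw [altSign_of_mem_Ico hδ (hk t ht)]
  rw [triangleWave_of_mem_Icc hδ hx, triangleWave_of_mem_Icc hδ hy]
  split_ifs at hF ⊢ <;> linarith

theorem integral_altSign_mul_eq_triangleWave (hg0 : ∀ t, 0 ≤ g t)
    (hg : ∀ x y, IntervalIntegrable g volume x y) (hδ : 0 < δ) {x : ℝ} (hax : a ≤ x) :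
    ∫ t in a..x, altSign δ (∫ s in a..t, g s) * g t = triangleWave δ (∫ s in a..x, g s) := by
  have hHc := intervalIntegral.continuous_primitive hg a
  have hHm := monotone_primitive hg0 hg (a := a)
  have hHa : ∫ s in a..a, g s = 0 := intervalIntegral.integral_same
  have hblock := fun {x y : ℝ} (hxy : x ≤ y) (k : ℕ) =>
    integral_altSign_mul_sub_triangleWave_eq hg0 hg hδ (a := a) hxy (k := k)
  -- Induction on the block of `H x`: the first points where `H` reaches `(k + 1) δ` and `k δ`
  -- link `x` to a point of the previous block.
  suffices ∀ k : ℕ, ∀ x, a ≤ x → (∫ s in a..x, g s) < (k + 1) * δ →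
      ∫ t in a..x, altSign δ (∫ s in a..t, g s) * g t = triangleWave δ (∫ s in a..x, g s) from
    this _ x hax ((div_lt_iff₀ hδ).1 (Nat.lt_floor_add_one _))
  intro k
  induction k with
  | zero =>
    intro x hax hx
    have key := hblock hax 0 (by simp [hδ.le])
      ⟨by simpa using hHa ▸ hHm hax, by simpa using hx.le⟩
      fun t ht => by simpa [hHa] using And.intro (hHm ht.1.le) ((hHm ht.2.le).trans_lt hx)
    simpa [hHa, triangleWave, sub_eq_zero] using key
  | succ k ih =>
    intro x hax hx
    push_cast at hx
    rcases lt_or_ge (∫ s in a..x, g s) ((k + 1) * δ) with hlt | hge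
    · exact ih x hax hlt
    obtain ⟨z, hz, hHz, hz_first⟩ := hHc.continuousOn.exists_first_eq hax
      ⟨by simp only [hHa]; positivity, hge⟩
    obtain ⟨z', hz', hHz', -⟩ := hHc.continuousOn.exists_first_eq (u := k * δ) hz.1
      ⟨by simp only [hHa]; positivity, by simp only [hHz]; nlinarith⟩
    have hxz := hblock hz.2 (k + 1) ⟨by push_cast; linarith, by push_cast; linarith⟩
      ⟨by push_cast; linarith, by push_cast; linarith⟩ fun t ht =>
        ⟨by push_cast; linarith [hHm ht.1.le], by push_cast; linarith [hHm ht.2.le]⟩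
    have hzz' := hblock hz'.2 k ⟨by push_cast; linarith, by push_cast; linarith⟩
      ⟨by push_cast; linarith, by push_cast; linarith⟩ fun t ht =>
        ⟨by push_cast; linarith [hHm ht.1.le], by
          push_cast; exact hz_first t ⟨hz'.1.trans ht.1.le, ht.2⟩⟩
    have := ih z' hz'.1 (by rw [hHz']; nlinarith)
    linarith

lemma abs_integral_altSign_mul_le (hg0 : ∀ t, 0 ≤ g t)
    (hg : ∀ x y, IntervalIntegrable g volume x y) (hδ : 0 < δ) {x : ℝ} (hax : a ≤ x) :
    |∫ t in a..x, altSign δ (∫ s in a..t, g s) * g t| ≤ δ := by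
  rw [integral_altSign_mul_eq_triangleWave hg0 hg hδ hax,
    abs_of_nonneg (triangleWave_nonneg hδ.le)]
  exact triangleWave_le hδ.le

end Sawtooth

lemma rpow_integral_abs_mul_rpow_le {α : Type*} [MeasurableSpace α] {μ : Measure α} {s : Set α}
    (hs : MeasurableSet s) {w F : α → ℝ} {p δ : ℝ} (hp : 0 < p) (hδ : 0 ≤ δ)
    (hw : ∀ x ∈ s, 0 ≤ w x) (hwp : IntegrableOn (fun x => w x ^ p) s μ)
    (hF : ∀ x ∈ s, |F x| ≤ δ) :
    (∫ x in s, |w x * F x| ^ p ∂μ) ^ (1 / p) ≤ δ * (∫ x in s, w x ^ p ∂μ) ^ (1 / p) := by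
  have hpoint : ∀ x ∈ s, |w x * F x| ^ p ≤ δ ^ p * w x ^ p := fun x hx => by
    rw [← Real.mul_rpow hδ (hw x hx), abs_mul, abs_of_nonneg (hw x hx), mul_comm δ]
    exact Real.rpow_le_rpow (mul_nonneg (hw x hx) (abs_nonneg _))
      (mul_le_mul_of_nonneg_left (hF x hx) (hw x hx)) hp.le
  calc (∫ x in s, |w x * F x| ^ p ∂μ) ^ (1 / p)
      ≤ (∫ x in s, δ ^ p * w x ^ p ∂μ) ^ (1 / p) := by
        refine Real.rpow_le_rpow (setIntegral_nonneg hs fun x _ => by positivity)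
          (integral_mono_of_nonneg (ae_of_all _ fun x => by positivity) (hwp.const_mul _)
            ((ae_restrict_iff' hs).2 (ae_of_all _ hpoint))) (by positivity)
    _ = δ * (∫ x in s, w x ^ p ∂μ) ^ (1 / p) := by
        rw [integral_const_mul, Real.mul_rpow (by positivity)
            (setIntegral_nonneg hs fun x hx => Real.rpow_nonneg (hw x hx) p),
          ← Real.rpow_mul hδ, mul_one_div_cancel hp.ne', Real.rpow_one]

theorem stmt2_general (c d p : ℝ) (hp : 1 < p) (w : ℝ → ℝ)
    (hwpos : ∀ x ∈ Ioo c d, 0 < w x)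
    (hwint : ∀ x ∈ Ioo c d, IntegrableOn (fun t => w t ^ p) (Ioo x d))
    (a b : ℝ) (hca : c < a) (hab : a < b) (hbd : b < d)
    (h : ℝ → ℝ) (hhm : Measurable h) (hh : IntegrableOn h (Icc a b))
    (ε : ℝ) (hε : 0 < ε) :
    ∃ f : ℝ → ℝ, Measurable f ∧ (∀ x, x ∉ Icc a b → f x = 0) ∧
      (∀ x ∈ Ioo a b, |f x| = |h x|) ∧
      (∫ x in Ioc a b, |w x * ∫ t in Ioc c x, f t| ^ p) ^ (1/p) < ε := by
  set g := (Ioc a b).indicator fun t => |h t|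
  have hg0 : ∀ t, 0 ≤ g t := indicator_nonneg fun t _ => abs_nonneg _
  have hg : Integrable g :=
    (integrable_indicator_iff measurableSet_Ioc).2 (hh.mono_set Ioc_subset_Icc_self).abs
  have hw : ∀ x ∈ Ioc a b, 0 ≤ w x := fun x hx =>
    (hwpos x ⟨hca.trans hx.1, hx.2.trans_lt hbd⟩).le
  set C := ∫ x in Ioc a b, w x ^ p
  have hC : 0 ≤ C := setIntegral_nonneg measurableSet_Ioc fun x hx => Real.rpow_nonneg (hw x hx) p
  set δ := ε / (C ^ (1 / p) + 1)
  have hδ : 0 < δ := by positivity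
  have hδC : δ * C ^ (1 / p) < ε := by
    have : δ * (C ^ (1 / p) + 1) = ε := div_mul_cancel₀ _ (by positivity)
    linarith
  refine ⟨fun t => altSign δ (∫ s in a..t, g s) * g t,
    (measurable_altSign.comp (hg.continuous_primitive a).measurable).mul
      (hhm.abs.indicator measurableSet_Ioc),
    fun x hx => by simp [g, indicator_of_notMem fun hx' => hx (Ioc_subset_Icc_self hx')],
    fun x hx => by
      simp [abs_mul, abs_altSign, g, indicator_of_mem (Ioo_subset_Ioc_self hx)],
    (rpow_integral_abs_mul_rpow_le measurableSet_Ioc (by linarith) hδ.le hw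
      ((hwint a ⟨hca, hab.trans hbd⟩).mono_set fun x hx => ⟨hx.1, hx.2.trans_lt hbd⟩)
      fun x hx => ?_).trans_lt hδC⟩
  rw [setIntegral_eq_of_subset_of_forall_sdiff_eq_zero measurableSet_Ioc
      (Ioc_subset_Ioc_left hca.le) fun t ht => ?_, ← intervalIntegral.integral_of_le hx.1.le]
  · exact abs_integral_altSign_mul_le hg0 (fun _ _ => hg.intervalIntegrable) hδ hx.1.le
  · simp [g, indicator_of_notMem fun h' : t ∈ Ioc a b => ht.2 ⟨h'.1, ht.1.2⟩]

theorem stmt2 (c d p : ℝ) (hcd : c < d) (hp : 1 < p) (w : ℝ → ℝ) (hwm : Measurable w)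
    (hwpos : ∀ x ∈ Ioo c d, 0 < w x)
    (hwint : ∀ x ∈ Ioo c d, IntegrableOn (fun t => w t ^ p) (Ioo x d))
    (a b : ℝ) (hca : c < a) (hab : a < b) (hbd : b < d)
    (h : ℝ → ℝ) (hhm : Measurable h) (hh : IntegrableOn h (Icc a b))
    (ε : ℝ) (hε : 0 < ε) :
    ∃ f : ℝ → ℝ, Measurable f ∧ (∀ x, x ∉ Icc a b → f x = 0) ∧
      (∀ x ∈ Ioo a b, |f x| = |h x|) ∧
      (∫ x in Ioc a b, |w x * ∫ t in Ioc c x, f t| ^ p) ^ (1/p) < ε :=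
  stmt2_general c d p hp w hwpos hwint a b hca hab hbd h hhm hh ε hε
end

section
/- Let I = (c,d) ⊂ ℝ, p ∈ (1,∞), w : I → (0,∞) measurable with w^p locally integrable near d, and let g : I → ℝ be measurable. If the set {x ∈ I : g(x) ≠ 0} has positive Lebesgue measure, then sup over nonzero f in Ch_{p,w}(I) of (∫_I |f g|) / ‖f‖_{Ch_{p,w}(I)} = ∞. Consequently the Köthe dual (associate space) of Ch_{p,w}(I) is {0}. -/
open MeasureTheory Set Filter

/-- membership in the altered Cesàro space `Ch_{p,w}((c,d))` (case ν = 1) -/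
def memCh (c d p : ℝ) (w f : ℝ → ℝ) : Prop :=
  Measurable f ∧ (∀ x ∈ Ioo c d, IntegrableOn f (Ioc c x)) ∧
    IntegrableOn (fun x => |w x * ∫ t in Ioc c x, f t| ^ p) (Ioo c d)

/-- seminorm of the altered Cesàro space -/
noncomputable def chNorm (c d p : ℝ) (w f : ℝ → ℝ) : ℝ :=
  (∫ x in Ioo c d, |w x * ∫ t in Ioc c x, f t| ^ p) ^ (1/p)

/-!
Shrink `{g ≠ 0}` to a set `E ⊆ (α, d)` of positive measure with `c < α`, so that `w ^ p` is
integrable where it matters. With `τ x = |E ∩ (-∞, x]|`, the map `τ` pushes Lebesgue measure on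
`E ∩ (-∞, x]` forward to Lebesgue measure on `(0, τ x]`. Hence `f = 1_E · s(τ)`, for a `±1`
square wave `s` of half-period `L`, has primitive `∫₀^{τ x} s`, which is bounded by `L` and
vanishes left of `α`; so `‖f‖ ≤ L ‖w‖_{L^p(α,d)}`, while `∫ |f g| ≥ ∫_E |g| > 0` for every `L`.
-/

open Topology

-- The ceiling makes `squareWave L` constant on each `(k L, (k + 1) L]`, matching `Ioc` integrals.
noncomputable def squareWave (L t : ℝ) : ℝ := if Even ⌈t / L⌉ then -1 else 1

theorem intervalIntegral_eq_of_eqOn_Ioc {f : ℝ → ℝ} {a b c : ℝ} (hab : a ≤ b)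
    (h : EqOn f (fun _ => c) (Ioc a b)) : ∫ t in a..b, f t = (b - a) * c := by
  rw [intervalIntegral.integral_of_le hab, setIntegral_congr_fun measurableSet_Ioc h]
  simp [hab]

namespace squareWave

variable {L : ℝ}

theorem measurable (L : ℝ) : Measurable (squareWave L) :=
  Measurable.ite ((Measurable.ceil (by fun_prop)) (.of_discrete : MeasurableSet {z : ℤ | Even z}))
    measurable_const measurable_const

theorem abs_eq_one (L t : ℝ) : |squareWave L t| = 1 := by
  unfold squareWave; split_ifs <;> simp

theorem periodic (hL : L ≠ 0) : Function.Periodic (squareWave L) (2 * L) := by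
  intro t
  have : (t + 2 * L) / L = t / L + (2 : ℤ) := by field_simp; push_cast; ring
  simp only [squareWave, this, Int.ceil_add_intCast, Int.even_add, even_two, iff_true]

theorem intervalIntegrable (L a b : ℝ) : IntervalIntegrable (squareWave L) volume a b :=
  (intervalIntegrable_const (c := (1 : ℝ))).mono_fun' (measurable L).aestronglyMeasurable
    (ae_of_all _ fun t => (abs_eq_one L t).le)

theorem eqOn_one (hL : 0 < L) : EqOn (squareWave L) (fun _ => 1) (Ioc 0 L) := by
  rintro t ⟨h0, h1⟩
  have : ⌈t / L⌉ = 1 := by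
    rw [Int.ceil_eq_iff]; constructor
    · norm_num; positivity
    · norm_num; rwa [div_le_one hL]
  simp [squareWave, this]

theorem eqOn_neg_one (hL : 0 < L) : EqOn (squareWave L) (fun _ => -1) (Ioc L (2 * L)) := by
  rintro t ⟨h0, h1⟩
  have : ⌈t / L⌉ = 2 := by
    rw [Int.ceil_eq_iff]; constructor
    · norm_num; rwa [lt_div_iff₀ hL, one_mul]
    · norm_num; rwa [div_le_iff₀ hL]
  simp [squareWave, this]

theorem abs_integral_le_of_mem_Icc (hL : 0 < L) {s : ℝ} (hs : s ∈ Icc 0 (2 * L)) :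
    |∫ t in 0..s, squareWave L t| ≤ L := by
  rcases le_total s L with hsL | hLs
  · rw [intervalIntegral_eq_of_eqOn_Ioc hs.1 ((eqOn_one hL).mono (Ioc_subset_Ioc_right hsL)),
      abs_le]; constructor <;> linarith [hs.1]
  · rw [← intervalIntegral.integral_add_adjacent_intervals (intervalIntegrable L 0 L)
      (intervalIntegrable L L s), intervalIntegral_eq_of_eqOn_Ioc hL.le (eqOn_one hL),
      intervalIntegral_eq_of_eqOn_Ioc hLs ((eqOn_neg_one hL).mono (Ioc_subset_Ioc_right hs.2)),
      abs_le]; constructor <;> linarith [hs.2]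

theorem integral_two_mul (hL : 0 < L) : ∫ t in 0..2 * L, squareWave L t = 0 := by
  rw [← intervalIntegral.integral_add_adjacent_intervals (intervalIntegrable L 0 L)
      (intervalIntegrable L L (2 * L)), intervalIntegral_eq_of_eqOn_Ioc hL.le (eqOn_one hL),
      intervalIntegral_eq_of_eqOn_Ioc (by linarith) (eqOn_neg_one hL)]
  ring

theorem abs_integral_le (hL : 0 < L) (s : ℝ) : |∫ t in 0..s, squareWave L t| ≤ L := by
  have hper : Function.Periodic (fun s => ∫ t in 0..s, squareWave L t) (2 * L) := fun s => by
    simp only [(periodic hL.ne').intervalIntegral_add_eq_add 0 s (intervalIntegrable L),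
      zero_add, integral_two_mul hL, add_zero]
  obtain ⟨s', hs', hss'⟩ := hper.exists_mem_Ico₀ (by positivity) s
  rw [hss']
  exact abs_integral_le_of_mem_Icc hL (Ico_subset_Icc_self hs')

end squareWave

noncomputable def volumeBelow (E : Set ℝ) (x : ℝ) : ℝ := (volume (E ∩ Iic x)).toReal

namespace volumeBelow

variable {E : Set ℝ}

theorem nonneg (E : Set ℝ) (x : ℝ) : 0 ≤ volumeBelow E x := ENNReal.toReal_nonneg

theorem ofReal_eq (hE : volume E ≠ ⊤) (x : ℝ) :
    ENNReal.ofReal (volumeBelow E x) = volume (E ∩ Iic x) :=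
  ENNReal.ofReal_toReal (measure_ne_top_of_subset inter_subset_left hE)

theorem monotone (hE : volume E ≠ ⊤) : Monotone (volumeBelow E) := fun _ _ hxy =>
  ENNReal.toReal_mono (measure_ne_top_of_subset inter_subset_left hE)
    (measure_mono (inter_subset_inter_right E (Iic_subset_Iic.2 hxy)))

theorem le_add_sub (hE : volume E ≠ ⊤) {x y : ℝ} (hxy : x ≤ y) :
    volumeBelow E y ≤ volumeBelow E x + (y - x) := by
  have hsub : E ∩ Iic y ⊆ (E ∩ Iic x) ∪ Ioc x y := fun u ⟨huE, huy⟩ =>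
    (le_or_gt u x).imp (fun h => ⟨huE, h⟩) (fun h => ⟨h, huy⟩)
  rw [← ENNReal.ofReal_le_ofReal_iff (by linarith [nonneg E x]), ENNReal.ofReal_add (nonneg E x)
    (by linarith), ofReal_eq hE, ofReal_eq hE, ← Real.volume_Ioc]
  exact (measure_mono hsub).trans (measure_union_le _ _)

theorem lipschitzWith (hE : volume E ≠ ⊤) : LipschitzWith 1 (volumeBelow E) := by
  refine LipschitzWith.of_le_add_mul 1 fun x y => ?_
  rw [NNReal.coe_one, one_mul, Real.dist_eq]
  rcases le_total x y with hxy | hyx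
  · linarith [monotone hE hxy, abs_nonneg (x - y)]
  · linarith [le_add_sub hE hyx, le_abs_self (x - y)]

theorem continuous (hE : volume E ≠ ⊤) : Continuous (volumeBelow E) :=
  (lipschitzWith hE).continuous

theorem eq_zero_of_le {α x : ℝ} (hEα : E ⊆ Ioi α) (hx : x ≤ α) : volumeBelow E x = 0 := by
  have : E ∩ Iic x = ∅ :=
    eq_empty_of_forall_notMem fun u ⟨huE, hux⟩ => (hEα huE).not_ge (hux.trans hx)
  simp [volumeBelow, this]

theorem volume_inter_preimage_Iic (hE : volume E ≠ ⊤) {α : ℝ} (hEα : E ⊆ Ioi α) (x a : ℝ) :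
    volume (E ∩ Iic x ∩ volumeBelow E ⁻¹' Iic a) = ENNReal.ofReal (min (volumeBelow E x) a) := by
  rcases lt_or_ge a 0 with ha | ha
  · have : volumeBelow E ⁻¹' Iic a = ∅ :=
      eq_empty_of_forall_notMem fun u hu => (nonneg E u).not_gt (lt_of_le_of_lt hu ha)
    simp [this, ENNReal.ofReal_of_nonpos (min_le_of_right_le ha.le)]
  rcases le_or_gt (volumeBelow E x) a with hxa | hax
  · have : E ∩ Iic x ⊆ volumeBelow E ⁻¹' Iic a := fun u hu => (monotone hE hu.2).trans hxa
    rw [inter_eq_left.2 this, min_eq_left hxa, ofReal_eq hE]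
  -- `T` is a closed lower set containing `α` and bounded by `x`, hence equal to `Iic (sSup T)`.
  set T := volumeBelow E ⁻¹' Iic a
  have hxT : x ∉ T := fun hx => (not_le.2 hax) hx
  have hTle : ∀ u ∈ T, u ≤ x := fun u hu =>
    le_of_not_gt fun hxu => hxT ((monotone hE hxu.le).trans hu)
  have hαT : α ∈ T := by
    simp only [T, mem_preimage, mem_Iic, eq_zero_of_le hEα le_rfl, ha]
  have hTclosed : IsClosed T := isClosed_Iic.preimage (continuous hE)
  set y := sSup T
  have hyT : y ∈ T := hTclosed.csSup_mem ⟨α, hαT⟩ ⟨x, hTle⟩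
  have hyx : y ≤ x := hTle y hyT
  have hTy : T = Iic y := Subset.antisymm (fun u hu => le_csSup ⟨x, hTle⟩ hu)
    fun u hu => (monotone hE hu).trans hyT
  obtain ⟨z, hz, hza⟩ := intermediate_value_Icc hyx (continuous hE).continuousOn ⟨hyT, hax.le⟩
  have hya : volumeBelow E y = a :=
    le_antisymm hyT (hza ▸ monotone hE (le_csSup ⟨x, hTle⟩ (hza ▸ le_rfl : volumeBelow E z ≤ a)))
  rw [hTy, inter_assoc, Iic_inter_Iic, min_eq_right hyx, min_eq_right hax.le, ← hya, ofReal_eq hE]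

theorem map_restrict (hE : volume E ≠ ⊤) (hEm : MeasurableSet E) {α : ℝ} (hEα : E ⊆ Ioi α)
    (x : ℝ) : (volume.restrict (E ∩ Iic x)).map (volumeBelow E) =
      volume.restrict (Ioc 0 (volumeBelow E x)) := by
  have : IsFiniteMeasure (volume.restrict (E ∩ Iic x)) :=
    isFiniteMeasure_restrict.2 (measure_ne_top_of_subset inter_subset_left hE)
  refine Measure.ext_of_Iic _ _ fun a => ?_
  rw [Measure.map_apply (continuous hE).measurable measurableSet_Iic,
    Measure.restrict_apply' (hEm.inter measurableSet_Iic), inter_comm,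
    Measure.restrict_apply measurableSet_Iic, volume_inter_preimage_Iic hE hEα, inter_comm,
    Ioc_inter_Iic, Real.volume_Ioc, sub_zero]

theorem setIntegral_comp (hE : volume E ≠ ⊤) (hEm : MeasurableSet E) {α : ℝ} (hEα : E ⊆ Ioi α)
    {φ : ℝ → ℝ} (hφ : Measurable φ) (x : ℝ) :
    ∫ u in E ∩ Iic x, φ (volumeBelow E u) = ∫ t in 0..volumeBelow E x, φ t := by
  rw [intervalIntegral.integral_of_le (nonneg E x), ← map_restrict hE hEm hEα,
    integral_map (continuous hE).aemeasurable hφ.aestronglyMeasurable]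

end volumeBelow

section PrimitiveBound

variable {c d p α L : ℝ} {w f : ℝ → ℝ}

theorem abs_mul_primitive_rpow_le (hp : 0 < p) (hw : ∀ x ∈ Ioo α d, 0 ≤ w x)
    (hF : ∀ x, |∫ t in Ioc c x, f t| ≤ L) (hF0 : ∀ x ≤ α, ∫ t in Ioc c x, f t = 0)
    {x : ℝ} (hx : x < d) :
    |w x * ∫ t in Ioc c x, f t| ^ p ≤ (Ioo α d).indicator (fun x => L ^ p * w x ^ p) x := by
  rcases le_or_gt x α with hxα | hαx
  · rw [hF0 x hxα, mul_zero, abs_zero, Real.zero_rpow hp.ne',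
      indicator_of_notMem fun h : x ∈ Ioo α d => hxα.not_gt h.1]
  · have hx' : x ∈ Ioo α d := ⟨hαx, hx⟩
    have hwx := hw x hx'
    rw [indicator_of_mem hx', abs_mul, abs_of_nonneg hwx,
      Real.mul_rpow hwx (abs_nonneg _), mul_comm]
    gcongr
    exact hF x

theorem memCh_of_abs_primitive_le (hp : 0 < p) (hwm : Measurable w)
    (hw : ∀ x ∈ Ioo α d, 0 ≤ w x) (hwint : IntegrableOn (fun t => w t ^ p) (Ioo α d))
    (hfm : Measurable f) (hloc : ∀ x ∈ Ioo c d, IntegrableOn f (Ioc c x))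
    (hFm : Measurable fun x => ∫ t in Ioc c x, f t)
    (hF : ∀ x, |∫ t in Ioc c x, f t| ≤ L) (hF0 : ∀ x ≤ α, ∫ t in Ioc c x, f t = 0) :
    memCh c d p w f := by
  refine ⟨hfm, hloc, Integrable.mono' (g := (Ioo α d).indicator fun x => L ^ p * w x ^ p)
    (IntegrableOn.integrable_indicator (hwint.const_mul _) measurableSet_Ioo).integrableOn
    (by fun_prop : Measurable _).aestronglyMeasurable ?_⟩
  refine (ae_restrict_iff' measurableSet_Ioo).2 (ae_of_all _ fun x hx => ?_)
  rw [Real.norm_of_nonneg (by positivity)]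
  exact abs_mul_primitive_rpow_le hp hw hF hF0 hx.2

theorem chNorm_le_of_abs_primitive_le (hp : 0 < p) (hcα : c ≤ α)
    (hw : ∀ x ∈ Ioo α d, 0 ≤ w x) (hwint : IntegrableOn (fun t => w t ^ p) (Ioo α d))
    (hF : ∀ x, |∫ t in Ioc c x, f t| ≤ L) (hF0 : ∀ x ≤ α, ∫ t in Ioc c x, f t = 0) :
    chNorm c d p w f ≤ L * (∫ x in Ioo α d, w x ^ p) ^ (1 / p) := by
  have hL : 0 ≤ L := (abs_nonneg _).trans (hF c)
  have hIoo : Ioo c d ∩ Ioo α d = Ioo α d :=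
    inter_eq_right.2 fun x hx => ⟨hcα.trans_lt hx.1, hx.2⟩
  have hbound : ∫ x in Ioo c d, |w x * ∫ t in Ioc c x, f t| ^ p
      ≤ L ^ p * ∫ x in Ioo α d, w x ^ p := by
    rw [← integral_const_mul, ← hIoo, ← setIntegral_indicator measurableSet_Ioo]
    refine integral_mono_of_nonneg (ae_of_all _ fun x => by positivity)
      (IntegrableOn.integrable_indicator (hwint.const_mul _) measurableSet_Ioo).integrableOn
      ((ae_restrict_iff' measurableSet_Ioo).2 (ae_of_all _ fun x hx => ?_))
    exact abs_mul_primitive_rpow_le hp hw hF hF0 hx.2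
  have hW : 0 ≤ ∫ x in Ioo α d, w x ^ p :=
    setIntegral_nonneg measurableSet_Ioo fun x hx => Real.rpow_nonneg (hw x hx) p
  calc chNorm c d p w f ≤ (L ^ p * ∫ x in Ioo α d, w x ^ p) ^ (1 / p) := by
        unfold chNorm; gcongr
    _ = L * (∫ x in Ioo α d, w x ^ p) ^ (1 / p) := by
        rw [Real.mul_rpow (by positivity) hW, one_div, Real.rpow_rpow_inv hL hp.ne']

end PrimitiveBound

noncomputable def alternatingOn (E : Set ℝ) (L : ℝ) : ℝ → ℝ :=
  E.indicator fun u => squareWave L (volumeBelow E u)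

namespace alternatingOn

variable {E : Set ℝ} {L c : ℝ}

theorem measurable (hE : volume E ≠ ⊤) (hEm : MeasurableSet E) : Measurable (alternatingOn E L) :=
  ((squareWave.measurable L).comp (volumeBelow.continuous hE).measurable).indicator hEm

theorem abs_le_one (E : Set ℝ) (L x : ℝ) : |alternatingOn E L x| ≤ 1 := by
  unfold alternatingOn
  by_cases hx : x ∈ E
  · rw [indicator_of_mem hx, squareWave.abs_eq_one]
  · simp [indicator_of_notMem hx]

theorem abs_eq_one {x : ℝ} (hx : x ∈ E) : |alternatingOn E L x| = 1 := by
  rw [alternatingOn, indicator_of_mem hx, squareWave.abs_eq_one]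

theorem integrableOn (hE : volume E ≠ ⊤) (hEm : MeasurableSet E) {s : Set ℝ}
    (hs : volume s ≠ ⊤) : IntegrableOn (alternatingOn E L) s :=
  (integrableOn_const hs (C := (1 : ℝ))).mono' (measurable hE hEm).aestronglyMeasurable
    (ae_of_all _ (abs_le_one E L))

theorem integral_Ioc (hE : volume E ≠ ⊤) (hEm : MeasurableSet E) (hEc : E ⊆ Ioi c) (x : ℝ) :
    ∫ t in Ioc c x, alternatingOn E L t = ∫ t in 0..volumeBelow E x, squareWave L t := by
  have hIoc : Ioc c x ∩ E = E ∩ Iic x :=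
    Subset.antisymm (fun u hu => ⟨hu.2, hu.1.2⟩) fun u hu => ⟨⟨hEc hu.1, hu.2⟩, hu.1⟩
  rw [alternatingOn, setIntegral_indicator hEm, hIoc,
    volumeBelow.setIntegral_comp hE hEm hEc (squareWave.measurable L)]

theorem measurable_primitive (hE : volume E ≠ ⊤) (hEm : MeasurableSet E) (hEc : E ⊆ Ioi c) :
    Measurable fun x => ∫ t in Ioc c x, alternatingOn E L t := by
  simp only [integral_Ioc hE hEm hEc]
  exact ((intervalIntegral.continuous_primitive (squareWave.intervalIntegrable L) 0).comp
    (volumeBelow.continuous hE)).measurable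

theorem abs_primitive_le (hE : volume E ≠ ⊤) (hEm : MeasurableSet E) (hEc : E ⊆ Ioi c)
    (hL : 0 < L) (x : ℝ) : |∫ t in Ioc c x, alternatingOn E L t| ≤ L := by
  rw [integral_Ioc hE hEm hEc]
  exact squareWave.abs_integral_le hL _

theorem primitive_eq_zero_of_le (hE : volume E ≠ ⊤) (hEm : MeasurableSet E) (hEc : E ⊆ Ioi c)
    {α x : ℝ} (hEα : E ⊆ Ioi α) (hx : x ≤ α) : ∫ t in Ioc c x, alternatingOn E L t = 0 := by
  rw [integral_Ioc hE hEm hEc, volumeBelow.eq_zero_of_le hEα hx, intervalIntegral.integral_same]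

variable {d p α : ℝ} {w : ℝ → ℝ}

theorem memCh (hp : 0 < p) (hwm : Measurable w) (hw : ∀ x ∈ Ioo α d, 0 ≤ w x)
    (hwint : IntegrableOn (fun t => w t ^ p) (Ioo α d)) (hEm : MeasurableSet E)
    (hEα : E ⊆ Ioo α d) (hcα : c ≤ α) (hL : 0 < L) : memCh c d p w (alternatingOn E L) := by
  have hE : volume E ≠ ⊤ := measure_ne_top_of_subset hEα measure_Ioo_lt_top.ne
  have hEc : E ⊆ Ioi c := fun x hx => hcα.trans_lt (hEα hx).1
  exact memCh_of_abs_primitive_le hp hwm hw hwint (measurable hE hEm)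
    (fun x _ => integrableOn hE hEm measure_Ioc_lt_top.ne) (measurable_primitive hE hEm hEc)
    (abs_primitive_le hE hEm hEc hL)
    (fun x => primitive_eq_zero_of_le hE hEm hEc (fun u hu => (hEα hu).1))

theorem chNorm_le (hp : 0 < p) (hw : ∀ x ∈ Ioo α d, 0 ≤ w x)
    (hwint : IntegrableOn (fun t => w t ^ p) (Ioo α d)) (hEm : MeasurableSet E)
    (hEα : E ⊆ Ioo α d) (hcα : c ≤ α) (hL : 0 < L) :
    chNorm c d p w (alternatingOn E L) ≤ L * (∫ x in Ioo α d, w x ^ p) ^ (1 / p) := by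
  have hE : volume E ≠ ⊤ := measure_ne_top_of_subset hEα measure_Ioo_lt_top.ne
  have hEc : E ⊆ Ioi c := fun x hx => hcα.trans_lt (hEα hx).1
  exact chNorm_le_of_abs_primitive_le hp hcα hw hwint (abs_primitive_le hE hEm hEc hL)
    (fun x => primitive_eq_zero_of_le hE hEm hEc (fun u hu => (hEα hu).1))

theorem setLIntegral_abs_le (hEm : MeasurableSet E) {s : Set ℝ} (hEs : E ⊆ s) (g : ℝ → ℝ) :
    ∫⁻ x in E, ENNReal.ofReal |g x| ≤ ∫⁻ x in s, ENNReal.ofReal |alternatingOn E L x * g x| :=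
  calc ∫⁻ x in E, ENNReal.ofReal |g x|
      = ∫⁻ x in E, ENNReal.ofReal |alternatingOn E L x * g x| :=
        setLIntegral_congr_fun hEm fun x hx => by rw [abs_mul, abs_eq_one hx, one_mul]
    _ ≤ _ := lintegral_mono_set hEs

end alternatingOn

theorem exists_lt_volume_inter_Ioi_pos {S : Set ℝ} {c : ℝ} (hS : S ⊆ Ioi c)
    (h : 0 < volume S) : ∃ α, c < α ∧ 0 < volume (S ∩ Ioi α) := by
  by_contra! hnull
  have hcover : S ⊆ ⋃ n : ℕ, S ∩ Ioi (c + 1 / (n + 1)) := fun x hx => by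
    obtain ⟨n, hn⟩ := exists_nat_one_div_lt (sub_pos.2 (mem_Ioi.1 (hS hx)))
    exact mem_iUnion.2 ⟨n, hx, by simp only [mem_Ioi]; linarith⟩
  refine h.ne' (measure_mono_null hcover (measure_iUnion_null fun n => ?_))
  exact nonpos_iff_eq_zero.1 (hnull _ (lt_add_of_pos_right c Nat.one_div_pos_of_nat))

theorem exists_pos_ofReal_mul_lt (K : ℝ) {a : ENNReal} (ha : 0 < a) :
    ∃ L > 0, ENNReal.ofReal (L * K) < a := by
  have hlim : Tendsto (fun L : ℝ => ENNReal.ofReal (L * K)) (𝓝[>] 0) (𝓝 0) := by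
    simpa using ENNReal.tendsto_ofReal
      (((continuous_mul_const K).tendsto 0).mono_left nhdsWithin_le_nhds)
  obtain ⟨L, hLa, hL⟩ := ((hlim.eventually (gt_mem_nhds ha)).and self_mem_nhdsWithin).exists
  exact ⟨L, hL, hLa⟩

theorem stmt3_general (c d p : ℝ) (hp : 1 < p) (w : ℝ → ℝ) (hwm : Measurable w)
    (hwpos : ∀ x ∈ Ioo c d, 0 < w x)
    (hwint : ∀ x ∈ Ioo c d, IntegrableOn (fun t => w t ^ p) (Ioo x d))
    (g : ℝ → ℝ) (hgm : Measurable g)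
    (hg : 0 < volume {x ∈ Ioo c d | g x ≠ 0}) :
    ∀ C : ℝ, 0 < C → ∃ f : ℝ → ℝ, memCh c d p w f ∧
      ENNReal.ofReal (C * chNorm c d p w f) <
        ∫⁻ x in Ioo c d, ENNReal.ofReal |f x * g x| := by
  intro C hC
  have hp0 : 0 < p := by linarith
  obtain ⟨α, hcα, hEpos⟩ := exists_lt_volume_inter_Ioi_pos (fun x hx => hx.1.1) hg
  set E := {x ∈ Ioo c d | g x ≠ 0} ∩ Ioi α
  have hEm : MeasurableSet E :=
    (measurableSet_Ioo.inter (hgm (measurableSet_singleton 0).compl)).inter measurableSet_Ioi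
  have hEα : E ⊆ Ioo α d := fun x hx => ⟨hx.2, hx.1.1.2⟩
  obtain ⟨x₀, hx₀⟩ := nonempty_of_measure_ne_zero hEpos.ne'
  have hα : α ∈ Ioo c d := ⟨hcα, (hEα hx₀).1.trans (hEα hx₀).2⟩
  have hw : ∀ x ∈ Ioo α d, 0 ≤ w x := fun x hx => (hwpos x ⟨hcα.trans hx.1, hx.2⟩).le
  have hgE : 0 < ∫⁻ x in E, ENNReal.ofReal |g x| := by
    rwa [setLIntegral_pos_iff (by fun_prop), inter_eq_right.2 fun x hx => by simpa using hx.1.2]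
  obtain ⟨L, hL, hLg⟩ := exists_pos_ofReal_mul_lt (C * (∫ x in Ioo α d, w x ^ p) ^ (1 / p)) hgE
  refine ⟨alternatingOn E L, alternatingOn.memCh hp0 hwm hw (hwint α hα) hEm hEα hcα.le hL, ?_⟩
  calc ENNReal.ofReal (C * chNorm c d p w (alternatingOn E L))
      ≤ ENNReal.ofReal (C * (L * (∫ x in Ioo α d, w x ^ p) ^ (1 / p))) := by
        gcongr
        exact alternatingOn.chNorm_le hp0 hw (hwint α hα) hEm hEα hcα.le hL
    _ < ∫⁻ x in E, ENNReal.ofReal |g x| := by rwa [mul_left_comm]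
    _ ≤ _ := alternatingOn.setLIntegral_abs_le hEm (fun x hx => hx.1.1) g

theorem stmt3 (c d p : ℝ) (hcd : c < d) (hp : 1 < p) (w : ℝ → ℝ) (hwm : Measurable w)
    (hwpos : ∀ x ∈ Ioo c d, 0 < w x)
    (hwint : ∀ x ∈ Ioo c d, IntegrableOn (fun t => w t ^ p) (Ioo x d))
    (g : ℝ → ℝ) (hgm : Measurable g)
    (hg : 0 < volume {x ∈ Ioo c d | g x ≠ 0}) :
    ∀ C : ℝ, 0 < C → ∃ f : ℝ → ℝ, memCh c d p w f ∧
      ENNReal.ofReal (C * chNorm c d p w f) <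
        ∫⁻ x in Ioo c d, ENNReal.ofReal |f x * g x| :=
  stmt3_general c d p hp w hwm hwpos hwint g hgm hg
end

section
/- Let I = (c,d) ⊂ ℝ, p ∈ (1,∞), w : I → (0,∞) measurable with ∫_x^d w^p < ∞ for all x ∈ I, and let g : I → ℝ be continuous. If sup over nonzero f ∈ Cs_{p,w}(I) of |∫_I f g| / ‖f‖_{Cs_{p,w}(I)} < ∞, where ‖f‖_{Cs_{p,w}(I)} = (∫_I [w(x) ∫_{(c,x]} |f|]^p dx)^{1/p}, then lim_{s → d⁻} g(s) = 0. -/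
open MeasureTheory Set Filter

/-- membership in the weighted Cesàro space `Cs_{p,w}((c,d))` (case ν = 1) -/
def memCs (c d p : ℝ) (w f : ℝ → ℝ) : Prop :=
  Measurable f ∧ (∀ x ∈ Ioo c d, IntegrableOn f (Ioc c x)) ∧
    IntegrableOn (fun x => (w x * ∫ t in Ioc c x, |f t|) ^ p) (Ioo c d)

/-- seminorm of the weighted Cesàro space -/
noncomputable def csNorm (c d p : ℝ) (w f : ℝ → ℝ) : ℝ :=
  (∫ x in Ioo c d, (w x * ∫ t in Ioc c x, |f t|) ^ p) ^ (1/p)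

open Topology

/-!
Testing the functional on `f = 1_(a,b)` gives `|∫_a^b g| ≤ C (b - a) (∫_a^d w^p)^(1/p)`: the
Cesàro primitive `∫_(c,x] |f|` vanishes for `x ≤ a` and never exceeds `b - a`. Dividing by
`b - a` and letting `b → a⁺` yields `|g a| ≤ C (∫_a^d w^p)^(1/p)` by continuity of `g`, and this
tail integral tends to `0` as `a → d⁻`.
-/

theorem HasDerivWithinAt.abs_le_of_abs_sub_le {G : ℝ → ℝ} {L K s : ℝ}
    (hG : HasDerivWithinAt G L (Ioi s) s) (h : ∀ᶠ b in 𝓝[>] s, |G b - G s| ≤ K * (b - s)) :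
    |L| ≤ K := by
  have hslope : Tendsto (slope G s) (𝓝[>] s) (𝓝 L) := by
    simpa using hasDerivWithinAt_iff_tendsto_slope.1 hG
  refine le_of_tendsto hslope.abs ?_
  filter_upwards [h, self_mem_nhdsWithin] with b hb (hsb : s < b)
  rwa [slope_def_field, abs_div, abs_of_pos (sub_pos.2 hsb), div_le_iff₀ (sub_pos.2 hsb)]

theorem tendsto_setIntegral_Ioo_nhdsLT {F : ℝ → ℝ} {x d : ℝ} (hxd : x < d)
    (hF : IntegrableOn F (Ioo x d)) :
    Tendsto (fun a => ∫ t in Ioo a d, F t) (𝓝[<] d) (𝓝 0) := by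
  have hcont : ContinuousWithinAt (fun a => ∫ t in a..d, F t) (Icc x d) d := by
    have hIcc : IntegrableOn F (uIcc x d) := by
      rw [uIcc_of_le hxd.le]; exact (integrableOn_Icc_iff_integrableOn_Ioo).2 hF
    have := intervalIntegral.continuousOn_primitive_interval_left hIcc
    rw [uIcc_of_le hxd.le] at this
    exact this d (right_mem_Icc.2 hxd.le)
  have hlim := (hcont.mono Ioo_subset_Icc_self).tendsto
  rw [intervalIntegral.integral_same, nhdsWithin_Ioo_eq_nhdsLT hxd] at hlim
  refine hlim.congr' ?_
  filter_upwards [Ioo_mem_nhdsLT hxd] with a ha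
  rw [intervalIntegral.integral_of_le ha.2.le, integral_Ioc_eq_integral_Ioo]

theorem IntegrableOn.indicator_Ioi {F : ℝ → ℝ} {a c d : ℝ} (hF : IntegrableOn F (Ioo a d)) :
    IntegrableOn ((Ioi a).indicator F) (Ioo c d) := by
  rw [IntegrableOn, integrable_indicator_iff measurableSet_Ioi, IntegrableOn,
    Measure.restrict_restrict measurableSet_Ioi]
  exact hF.mono_set fun x hx => ⟨hx.1, hx.2.2⟩

section Cesaro

variable {c d p : ℝ} {w : ℝ → ℝ}

theorem cesaro_integrand_nonneg {x : ℝ} (hwx : 0 ≤ w x) (f : ℝ → ℝ) :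
    0 ≤ (w x * ∫ t in Ioc c x, |f t|) ^ p :=
  Real.rpow_nonneg (mul_nonneg hwx (integral_nonneg fun _ => abs_nonneg _)) p

theorem csNorm_nonneg (hw : ∀ x ∈ Ioo c d, 0 ≤ w x) (f : ℝ → ℝ) : 0 ≤ csNorm c d p w f :=
  Real.rpow_nonneg (setIntegral_nonneg measurableSet_Ioo fun x hx =>
    cesaro_integrand_nonneg (hw x hx) f) _

theorem setIntegral_Ioc_abs_indicator_Ioo (a b c x : ℝ) :
    ∫ t in Ioc c x, |(Ioo a b).indicator (1 : ℝ → ℝ) t| = volume.real (Ioo a b ∩ Ioc c x) := by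
  have habs : ∀ t, |(Ioo a b).indicator (1 : ℝ → ℝ) t| = (Ioo a b).indicator 1 t :=
    fun t => abs_of_nonneg (indicator_nonneg (fun _ _ => zero_le_one) t)
  simp only [habs]
  rw [integral_indicator_one measurableSet_Ioo, measureReal_restrict_apply measurableSet_Ioo]

theorem monotone_setIntegral_Ioc_abs_indicator_Ioo (a b c : ℝ) :
    Monotone fun x => ∫ t in Ioc c x, |(Ioo a b).indicator (1 : ℝ → ℝ) t| := by
  intro x y hxy
  simp only [setIntegral_Ioc_abs_indicator_Ioo]
  exact measureReal_mono (inter_subset_inter_right _ (Ioc_subset_Ioc_right hxy))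
    (measure_ne_top_of_subset inter_subset_left measure_Ioo_lt_top.ne)

theorem cesaro_indicator_Ioo_le {a b : ℝ} (hp : 0 < p) (hab : a ≤ b) {x : ℝ} (hwx : 0 ≤ w x) :
    (w x * ∫ t in Ioc c x, |(Ioo a b).indicator (1 : ℝ → ℝ) t|) ^ p ≤
      (b - a) ^ p * (Ioi a).indicator (fun t => w t ^ p) x := by
  rw [setIntegral_Ioc_abs_indicator_Ioo]
  by_cases hxa : x ∈ Ioi a
  · rw [indicator_of_mem hxa, ← Real.mul_rpow (sub_nonneg.2 hab) hwx, mul_comm (b - a)]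
    refine Real.rpow_le_rpow (mul_nonneg hwx measureReal_nonneg)
      (mul_le_mul_of_nonneg_left ?_ hwx) hp.le
    exact (measureReal_mono inter_subset_left measure_Ioo_lt_top.ne).trans
      (Real.volume_real_Ioo_of_le hab).le
  · have hempty : Ioo a b ∩ Ioc c x = ∅ :=
      eq_empty_of_forall_notMem fun t ht => hxa (ht.1.1.trans_le ht.2.2)
    simp [indicator_of_notMem hxa, hempty, Real.zero_rpow hp.ne']

theorem setIntegral_indicator_Ioo_one_mul {a b : ℝ} (g : ℝ → ℝ) (hca : c ≤ a) (hab : a ≤ b)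
    (hbd : b ≤ d) : ∫ x in Ioo c d, (Ioo a b).indicator 1 x * g x = ∫ x in a..b, g x := by
  have hfg : (fun x => (Ioo a b).indicator 1 x * g x) = (Ioo a b).indicator g := by
    ext x; by_cases hx : x ∈ Ioo a b <;> simp [hx]
  rw [hfg, setIntegral_indicator measurableSet_Ioo,
    inter_eq_self_of_subset_right (Ioo_subset_Ioo hca hbd), intervalIntegral.integral_of_le hab,
    integral_Ioc_eq_integral_Ioo]

variable {a b : ℝ} (hp : 0 < p) (hwm : Measurable w) (hw : ∀ x ∈ Ioo c d, 0 ≤ w x)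
  (hab : a ≤ b) (hwint : IntegrableOn (fun t => w t ^ p) (Ioo a d))
include hp hwm hw hab hwint

theorem memCs_indicator_Ioo : memCs c d p w ((Ioo a b).indicator 1) := by
  refine ⟨measurable_one.indicator measurableSet_Ioo, fun x _ => ?_, ?_⟩
  · exact (integrable_indicator_iff measurableSet_Ioo).2
      (integrableOn_const measure_Ioo_lt_top.ne) |>.integrableOn
  · have hmeas : Measurable fun x =>
        (w x * ∫ t in Ioc c x, |(Ioo a b).indicator (1 : ℝ → ℝ) t|) ^ p :=
      (Real.continuous_rpow_const hp.le).measurable.comp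
        (hwm.mul (monotone_setIntegral_Ioc_abs_indicator_Ioo a b c).measurable)
    refine ((IntegrableOn.indicator_Ioi hwint).const_mul ((b - a) ^ p)).mono'
      hmeas.aestronglyMeasurable ?_
    filter_upwards [ae_restrict_mem measurableSet_Ioo] with x hx
    rw [Real.norm_eq_abs, abs_of_nonneg (cesaro_integrand_nonneg (hw x hx) _)]
    exact cesaro_indicator_Ioo_le hp hab (hw x hx)

theorem csNorm_indicator_Ioo_le (hca : c ≤ a) :
    csNorm c d p w ((Ioo a b).indicator 1) ≤ (b - a) * (∫ x in Ioo a d, w x ^ p) ^ (1 / p) := by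
  have hsub : Ioo c d ∩ Ioi a = Ioo a d := by
    ext x; exact ⟨fun hx => ⟨hx.2, hx.1.2⟩, fun hx => ⟨⟨hca.trans_lt hx.1, hx.2⟩, hx.1⟩⟩
  have hint : (∫ x in Ioo c d, (w x * ∫ t in Ioc c x, |(Ioo a b).indicator (1 : ℝ → ℝ) t|) ^ p)
      ≤ (b - a) ^ p * ∫ x in Ioo a d, w x ^ p := by
    rw [← hsub, ← setIntegral_indicator measurableSet_Ioi, ← integral_const_mul]
    exact setIntegral_mono_on (memCs_indicator_Ioo hp hwm hw hab hwint).2.2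
      ((IntegrableOn.indicator_Ioi hwint).const_mul _) measurableSet_Ioo
      fun x hx => cesaro_indicator_Ioo_le hp hab (hw x hx)
  have htail : 0 ≤ ∫ x in Ioo a d, w x ^ p :=
    setIntegral_nonneg measurableSet_Ioo fun x hx =>
      Real.rpow_nonneg (hw x ⟨hca.trans_lt hx.1, hx.2⟩) p
  calc csNorm c d p w ((Ioo a b).indicator 1)
      ≤ ((b - a) ^ p * ∫ x in Ioo a d, w x ^ p) ^ (1 / p) :=
        Real.rpow_le_rpow (setIntegral_nonneg measurableSet_Ioo fun x hx =>
          cesaro_integrand_nonneg (hw x hx) _) hint (by positivity)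
    _ = (b - a) * (∫ x in Ioo a d, w x ^ p) ^ (1 / p) := by
      rw [Real.mul_rpow (Real.rpow_nonneg (sub_nonneg.2 hab) p) htail,
        ← Real.rpow_mul (sub_nonneg.2 hab), mul_one_div_cancel hp.ne', Real.rpow_one]

theorem abs_intervalIntegral_le_of_bounded_on_csNorm {g : ℝ → ℝ} {C : ℝ}
    (hC : ∀ f : ℝ → ℝ, memCs c d p w f → |∫ x in Ioo c d, f x * g x| ≤ C * csNorm c d p w f)
    (hca : c ≤ a) (hbd : b ≤ d) :
    |∫ x in a..b, g x| ≤ max C 0 * (∫ x in Ioo a d, w x ^ p) ^ (1 / p) * (b - a) := by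
  set f := (Ioo a b).indicator (1 : ℝ → ℝ)
  calc |∫ x in a..b, g x| = |∫ x in Ioo c d, f x * g x| := by
        rw [setIntegral_indicator_Ioo_one_mul g hca hab hbd]
    _ ≤ C * csNorm c d p w f := hC f (memCs_indicator_Ioo hp hwm hw hab hwint)
    _ ≤ max C 0 * csNorm c d p w f :=
        mul_le_mul_of_nonneg_right (le_max_left C 0) (csNorm_nonneg hw f)
    _ ≤ max C 0 * ((b - a) * (∫ x in Ioo a d, w x ^ p) ^ (1 / p)) :=
        mul_le_mul_of_nonneg_left (csNorm_indicator_Ioo_le hp hwm hw hab hwint hca)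
          (le_max_right C 0)
    _ = max C 0 * (∫ x in Ioo a d, w x ^ p) ^ (1 / p) * (b - a) := by ring

end Cesaro

theorem stmt4 (c d p : ℝ) (hcd : c < d) (hp : 1 < p) (w : ℝ → ℝ) (hwm : Measurable w)
    (hwpos : ∀ x ∈ Ioo c d, 0 < w x)
    (hwint : ∀ x ∈ Ioo c d, IntegrableOn (fun t => w t ^ p) (Ioo x d))
    (g : ℝ → ℝ) (hgc : ContinuousOn g (Ioo c d))
    (C : ℝ)
    (hC : ∀ f : ℝ → ℝ, memCs c d p w f →
      IntegrableOn (fun x => f x * g x) (Ioo c d) ∧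
      |∫ x in Ioo c d, f x * g x| ≤ C * csNorm c d p w f) :
    Tendsto g (nhdsWithin d (Iio d)) (nhds 0) := by
  have hp₀ : 0 < p := zero_lt_one.trans hp
  have hw : ∀ x ∈ Ioo c d, 0 ≤ w x := fun x hx => (hwpos x hx).le
  have hpoint : ∀ s ∈ Ioo c d, |g s| ≤ max C 0 * (∫ x in Ioo s d, w x ^ p) ^ (1 / p) := by
    intro s hs
    have hderiv : HasDerivAt (fun u => ∫ x in s..u, g x) (g s) s :=
      intervalIntegral.integral_hasDerivAt_right IntervalIntegrable.refl
        (hgc.stronglyMeasurableAtFilter isOpen_Ioo s hs)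
        (hgc.continuousAt (Ioo_mem_nhds hs.1 hs.2))
    refine hderiv.hasDerivWithinAt.abs_le_of_abs_sub_le ?_
    filter_upwards [Ioo_mem_nhdsGT hs.2] with b hb
    rw [intervalIntegral.integral_same, sub_zero]
    exact abs_intervalIntegral_le_of_bounded_on_csNorm hp₀ hwm hw hb.1.le (hwint s hs)
      (fun f hf => (hC f hf).2) hs.1.le hb.2.le
  obtain ⟨x₀, hx₀⟩ := nonempty_Ioo.2 hcd
  have htail := ((tendsto_setIntegral_Ioo_nhdsLT hx₀.2 (hwint x₀ hx₀)).rpow_const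
    (Or.inr (one_div_pos.2 hp₀).le)).const_mul (max C 0)
  rw [Real.zero_rpow (one_div_pos.2 hp₀).ne', mul_zero] at htail
  refine squeeze_zero_norm' ?_ htail
  filter_upwards [Ioo_mem_nhdsLT hcd] with s hs using hpoint s hs
end

section
/- Let I = (c,d) ⊂ ℝ, p ∈ (1,∞), p' = p/(p−1), w : I → (0,∞) measurable with ∫_x^d w^p < ∞ for all x ∈ I. Suppose g̃ is locally absolutely continuous on I with g̃(x) = −∫_x^d Dg̃ for all x and Dg̃/w ∈ L^{p'}(I). Then for every f ∈ Cs_{p,w}(I), |∫_I f g̃| ≤ (∫_I |Dg̃/w|^{p'})^{1/p'} · (∫_I |w(x) ∫_c^x f|^p dx)^{1/p}. -/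
open MeasureTheory Set Filter

/-!
Writing `F x = ∫_{(c,x]} f` and `g̃ x = -∫_{(x,d)} v`, Fubini on the triangle `c < x ≤ t < d`
gives `∫ f g̃ = -∫ F v`, an integration by parts without boundary terms. Hölder's inequality for
the factorisation `F v = (w F) · (v / w)` bounds the right side, and the same factorisation with
`∫_{(c,x]} |f|` in place of `F` makes the swap legitimate.
-/

lemma stronglyMeasurable_integral_Ioc {f : ℝ → ℝ} (hf : Measurable f) (c : ℝ) :
    StronglyMeasurable (fun x => ∫ t in Ioc c x, f t) := by
  have hT : MeasurableSet {z : ℝ × ℝ | z.2 ∈ Ioc c z.1} :=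
    (measurableSet_lt measurable_const measurable_snd).inter
      (measurableSet_le measurable_snd measurable_fst)
  have hm : StronglyMeasurable ({z : ℝ × ℝ | z.2 ∈ Ioc c z.1}.indicator fun z => f z.2) :=
    ((hf.comp measurable_snd).indicator hT).stronglyMeasurable
  convert hm.integral_prod_right' (ν := volume) using 2 with x
  rw [← integral_indicator measurableSet_Ioc]
  rfl

lemma memLp_ofReal_of_integrable_abs_rpow {α : Type*} [MeasurableSpace α] {μ : Measure α}
    {f : α → ℝ} {p : ℝ} (hp : 0 < p) (hf : AEStronglyMeasurable f μ)
    (hfp : Integrable (fun x => |f x| ^ p) μ) : MemLp f (ENNReal.ofReal p) μ :=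
  (integrable_norm_rpow_iff hf (by simpa using hp) ENNReal.ofReal_ne_top).1
    (by simpa [ENNReal.toReal_ofReal hp.le] using hfp)

theorem integrable_mul_and_abs_integral_mul_le_of_weight {α : Type*} [MeasurableSpace α]
    {μ : Measure α} {p q : ℝ} (hpq : p.HolderConjugate q) {F v w : α → ℝ}
    (hw : ∀ᵐ x ∂μ, w x ≠ 0)
    (hFLp : MemLp (fun x => w x * F x) (ENNReal.ofReal p) μ)
    (hvLp : MemLp (fun x => v x / w x) (ENNReal.ofReal q) μ) :
    Integrable (fun x => F x * v x) μ ∧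
      |∫ x, F x * v x ∂μ| ≤
        (∫ x, |v x / w x| ^ q ∂μ) ^ (1 / q) * (∫ x, |w x * F x| ^ p ∂μ) ^ (1 / p) := by
  have hfactor : (fun x => w x * F x) * (fun x => v x / w x) =ᵐ[μ] fun x => F x * v x := by
    filter_upwards [hw] with x hx
    simp only [Pi.mul_apply]
    field_simp
  have := Real.HolderConjugate.ennrealOfReal hpq
  refine ⟨(hFLp.integrable_mul hvLp).congr hfactor, ?_⟩
  calc |∫ x, F x * v x ∂μ| ≤ ∫ x, |F x * v x| ∂μ := abs_integral_le_integral_abs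
    _ = ∫ x, ‖w x * F x‖ * ‖v x / w x‖ ∂μ := by
        refine integral_congr_ae ?_
        filter_upwards [hfactor] with x hx
        rw [← hx]
        simp only [Pi.mul_apply, Real.norm_eq_abs, abs_mul]
    _ ≤ _ := integral_mul_norm_le_Lp_mul_Lq hpq hFLp hvLp
    _ = _ := by simp only [Real.norm_eq_abs]; rw [mul_comm]

section Triangle

variable {c d : ℝ} {f v : ℝ → ℝ}

noncomputable def triangleKernel (c d : ℝ) (f v : ℝ → ℝ) (z : ℝ × ℝ) : ℝ :=
  if c < z.1 ∧ z.1 ≤ z.2 ∧ z.2 < d then f z.1 * v z.2 else 0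

lemma measurable_triangleKernel (hf : Measurable f) (hv : Measurable v) :
    Measurable (triangleKernel c d f v) :=
  Measurable.ite ((measurableSet_lt measurable_const measurable_fst).inter
    ((measurableSet_le measurable_fst measurable_snd).inter
      (measurableSet_lt measurable_snd measurable_const)))
    ((hf.comp measurable_fst).mul (hv.comp measurable_snd)) measurable_const

lemma triangleKernel_eq_indicator_Ioc (x t : ℝ) :
    triangleKernel c d f v (x, t) =
      (Ioo c d).indicator (fun t => (Ioc c t).indicator (fun x => f x * v t) x) t := by
  simp only [triangleKernel, indicator_apply, mem_Ioo, mem_Ioc]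
  split_ifs <;> grind

lemma triangleKernel_eq_indicator_Ico (x t : ℝ) :
    triangleKernel c d f v (x, t) =
      (Ioo c d).indicator (fun x => (Ico x d).indicator (fun t => f x * v t) t) x := by
  simp only [triangleKernel, indicator_apply, mem_Ioo, mem_Ico]
  split_ifs <;> grind

lemma integral_triangleKernel_fst (t : ℝ) :
    ∫ x, triangleKernel c d f v (x, t) =
      (Ioo c d).indicator (fun t => (∫ x in Ioc c t, f x) * v t) t := by
  simp_rw [triangleKernel_eq_indicator_Ioc]
  by_cases ht : t ∈ Ioo c d <;>
    simp [ht, integral_indicator measurableSet_Ioc, integral_mul_const]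

lemma integral_triangleKernel_snd (x : ℝ) :
    ∫ t, triangleKernel c d f v (x, t) =
      (Ioo c d).indicator (fun x => f x * ∫ t in Ioo x d, v t) x := by
  simp_rw [triangleKernel_eq_indicator_Ico]
  by_cases hx : x ∈ Ioo c d <;>
    simp [hx, integral_indicator measurableSet_Ico, integral_const_mul,
      integral_Ico_eq_integral_Ioo]

lemma norm_triangleKernel (z : ℝ × ℝ) :
    ‖triangleKernel c d f v z‖ = triangleKernel c d (fun x => |f x|) (fun t => |v t|) z := by
  unfold triangleKernel
  split_ifs <;> simp

lemma integrable_triangleKernel (hf : Measurable f) (hv : Measurable v)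
    (hfloc : ∀ t ∈ Ioo c d, IntegrableOn f (Ioc c t))
    (hfv : IntegrableOn (fun t => (∫ x in Ioc c t, |f x|) * v t) (Ioo c d)) :
    Integrable (triangleKernel c d f v) (volume.prod volume) := by
  refine (integrable_prod_iff' (measurable_triangleKernel hf hv).aestronglyMeasurable).2
    ⟨ae_of_all _ fun t => ?_, ?_⟩
  · simp_rw [triangleKernel_eq_indicator_Ioc]
    by_cases ht : t ∈ Ioo c d
    · simp only [indicator_of_mem ht]
      exact (integrable_indicator_iff measurableSet_Ioc).2 ((hfloc t ht).mul_const (v t))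
    · simp [ht]
  · simp_rw [norm_triangleKernel, integral_triangleKernel_fst]
    refine (integrable_indicator_iff measurableSet_Ioo).2
      (IntegrableOn.congr_fun (Integrable.norm hfv) (fun t _ => ?_) measurableSet_Ioo)
    have hG : 0 ≤ ∫ x in Ioc c t, |f x| := integral_nonneg fun x => abs_nonneg (f x)
    simp [hG]

theorem integral_mul_integral_Ioo_eq (hf : Measurable f) (hv : Measurable v)
    (hfloc : ∀ t ∈ Ioo c d, IntegrableOn f (Ioc c t))
    (hfv : IntegrableOn (fun t => (∫ x in Ioc c t, |f x|) * v t) (Ioo c d)) :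
    IntegrableOn (fun x => f x * ∫ t in Ioo x d, v t) (Ioo c d) ∧
      ∫ x in Ioo c d, f x * ∫ t in Ioo x d, v t =
        ∫ t in Ioo c d, (∫ x in Ioc c t, f x) * v t := by
  have hK := integrable_triangleKernel hf hv hfloc hfv
  refine ⟨(integrable_indicator_iff measurableSet_Ioo).1 ?_, ?_⟩
  · simpa only [integral_triangleKernel_snd] using hK.integral_prod_left
  · simpa only [integral_triangleKernel_snd, integral_triangleKernel_fst,
      integral_indicator measurableSet_Ioo] using
      integral_integral_swap (f := fun x t => triangleKernel c d f v (x, t)) hK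

end Triangle

theorem stmt7_general (c d p q : ℝ) (hp : 1 < p) (hq : q = p / (p - 1))
    (w : ℝ → ℝ) (hwm : Measurable w)
    (hwpos : ∀ x ∈ Ioo c d, 0 < w x)
    (gt v : ℝ → ℝ) (hvm : Measurable v)
    (hrep : ∀ x ∈ Ioo c d, IntegrableOn v (Ioo x d) ∧ gt x = -∫ t in Ioo x d, v t)
    (hvq : IntegrableOn (fun x => |v x / w x| ^ q) (Ioo c d))
    (f : ℝ → ℝ) (hfm : Measurable f)
    (hfloc : ∀ x ∈ Ioo c d, IntegrableOn f (Ioc c x))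
    (hfCs : IntegrableOn (fun x => (w x * ∫ t in Ioc c x, |f t|) ^ p) (Ioo c d)) :
    IntegrableOn (fun x => f x * gt x) (Ioo c d) ∧
    |∫ x in Ioo c d, f x * gt x| ≤
      (∫ x in Ioo c d, |v x / w x| ^ q) ^ (1/q) *
        (∫ x in Ioo c d, |w x * ∫ t in Ioc c x, f t| ^ p) ^ (1/p) := by
  have hpq : p.HolderConjugate q := (Real.holderConjugate_iff_eq_conjExponent hp).2 hq
  have hw : ∀ᵐ x ∂volume.restrict (Ioo c d), w x ≠ 0 :=
    (ae_restrict_mem measurableSet_Ioo).mono fun x hx => (hwpos x hx).ne'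
  have hvLp := memLp_ofReal_of_integrable_abs_rpow hpq.symm.pos
    (hvm.div hwm).aestronglyMeasurable hvq
  have hGLp : MemLp (fun x => w x * ∫ t in Ioc c x, |f t|) (ENNReal.ofReal p)
      (volume.restrict (Ioo c d)) := by
    refine memLp_ofReal_of_integrable_abs_rpow hpq.pos
      (hwm.aestronglyMeasurable.mul
        (stronglyMeasurable_integral_Ioc hfm.abs c).aestronglyMeasurable)
      (hfCs.congr_fun (fun x hx => ?_) measurableSet_Ioo)
    rw [abs_of_nonneg (mul_nonneg (hwpos x hx).le (integral_nonneg fun t => abs_nonneg (f t)))]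
  have hFLp : MemLp (fun x => w x * ∫ t in Ioc c x, f t) (ENNReal.ofReal p)
      (volume.restrict (Ioo c d)) := by
    refine hGLp.of_le (hwm.aestronglyMeasurable.mul
      (stronglyMeasurable_integral_Ioc hfm c).aestronglyMeasurable) (ae_of_all _ fun x => ?_)
    rw [norm_mul, norm_mul]
    gcongr
    exact abs_integral_le_integral_abs.trans (le_abs_self _)
  obtain ⟨hfv, hparts⟩ := integral_mul_integral_Ioo_eq hfm hvm hfloc
    (integrable_mul_and_abs_integral_mul_le_of_weight hpq hw hGLp hvLp).1
  have hgt : EqOn (fun x => f x * gt x) (fun x => -(f x * ∫ t in Ioo x d, v t)) (Ioo c d) :=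
    fun x hx => by simp [(hrep x hx).2]
  refine ⟨hfv.neg.congr_fun hgt.symm measurableSet_Ioo, ?_⟩
  rw [setIntegral_congr_fun measurableSet_Ioo hgt, integral_neg, abs_neg, hparts]
  exact (integrable_mul_and_abs_integral_mul_le_of_weight hpq hw hFLp hvLp).2

theorem stmt7 (c d p q : ℝ) (hcd : c < d) (hp : 1 < p) (hq : q = p / (p - 1))
    (w : ℝ → ℝ) (hwm : Measurable w)
    (hwpos : ∀ x ∈ Ioo c d, 0 < w x)
    (hwint : ∀ x ∈ Ioo c d, IntegrableOn (fun t => w t ^ p) (Ioo x d))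
    (gt v : ℝ → ℝ) (hvm : Measurable v)
    (hrep : ∀ x ∈ Ioo c d, IntegrableOn v (Ioo x d) ∧ gt x = -∫ t in Ioo x d, v t)
    (hvq : IntegrableOn (fun x => |v x / w x| ^ q) (Ioo c d))
    (f : ℝ → ℝ) (hfm : Measurable f)
    (hfloc : ∀ x ∈ Ioo c d, IntegrableOn f (Ioc c x))
    (hfCs : IntegrableOn (fun x => (w x * ∫ t in Ioc c x, |f t|) ^ p) (Ioo c d)) :
    IntegrableOn (fun x => f x * gt x) (Ioo c d) ∧
    |∫ x in Ioo c d, f x * gt x| ≤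
      (∫ x in Ioo c d, |v x / w x| ^ q) ^ (1/q) *
        (∫ x in Ioo c d, |w x * ∫ t in Ioc c x, f t| ^ p) ^ (1/p) :=
  stmt7_general c d p q hp hq w hwm hwpos gt v hvm hrep hvq f hfm hfloc hfCs
end

section
/- Let I = (c,d) ⊂ ℝ, p ∈ (1,∞), w : I → (0,∞) measurable with ∫_x^d w^p < ∞ for all x ∈ I. Suppose g has a continuous representative g̃ and J(g) := sup over nonzero f ∈ Ch_{p,w}(I) of |∫_I f g| / ‖f‖_{Ch_{p,w}(I)} < ∞. Then there exists b ∈ I such that g̃ = 0 Lebesgue-a.e. on [b, d). -/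
open MeasureTheory Set Filter

/-!
Suppose `g̃` does not vanish a.e. on any `[b, d)`. By continuity there are disjoint intervals
`(aₖ, bₖ] ⊂ (c, d)` accumulating at `d` on which `|g̃| ≥ εₖ > 0`, so short that
`εₖ⁻ᵖ ∫_{(aₖ, bₖ]} wᵖ ≤ 2⁻ᵏ`. The zigzag equal to `±1 / (εₖ (bₖ - aₖ))` on the two halves of
`(aₖ, bₖ]` has as primitive a tent supported in `(aₖ, bₖ)` of height at most `εₖ⁻¹`, so the sum
`f` of these zigzags lies in `Ch_{p,w}`; but each of them contributes at least `1` to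
`∫ |f g|`, so `f g` is not integrable.
-/

open Topology Function

theorem pairwise_disjoint_Ioc_of_forall_le {α : Type*} [LinearOrder α] {a b : ℕ → α}
    (hab : ∀ k, a k ≤ b k) (hba : ∀ k, b k ≤ a (k + 1)) :
    Pairwise (Disjoint on fun k => Ioc (a k) (b k)) := by
  refine (pairwise_disjoint_on _).2 fun j k hjk => Ioc_disjoint_Ioc_of_le ?_
  exact (hba j).trans (monotone_nat_of_le_succ (fun n => (hab n).trans (hba n)) hjk)

section DisjointSupports

variable {α : Type*} {s : ℕ → Set α} {φ : ℕ → α → ℝ}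

theorem tsum_eq_of_pairwise_disjoint_of_mem (hs : Pairwise (Disjoint on s))
    (hφ : ∀ k, ∀ x ∉ s k, φ k x = 0) {j : ℕ} {x : α} (hx : x ∈ s j) :
    ∑' k, φ k x = φ j x :=
  tsum_eq_single j fun k hkj => hφ k x fun hxk => disjoint_left.1 (hs hkj) hxk hx

theorem measurable_tsum_of_pairwise_disjoint [MeasurableSpace α] (hs : Pairwise (Disjoint on s))
    (hφ : ∀ k, ∀ x ∉ s k, φ k x = 0) (hm : ∀ k, Measurable (φ k)) :
    Measurable fun x => ∑' k, φ k x := by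
  refine measurable_of_tendsto_metrizable
    (fun n => Finset.measurable_sum (Finset.range n) fun k _ => hm k) ?_
  refine tendsto_pi_nhds.2 fun x => (summable_of_hasFiniteSupport ?_).hasSum.tendsto_sum_nat
  refine Subsingleton.finite fun j hj k hk => ?_
  by_contra hjk
  exact hj (hφ j x fun hxj => hk (hφ k x fun hxk => disjoint_left.1 (hs hjk) hxj hxk))

end DisjointSupports

theorem mul_measureReal_le_setIntegral_of_ae_le {α : Type*} [MeasurableSpace α] {μ : Measure α}
    {s : Set α} {f : α → ℝ} {c : ℝ} (hμs : μ s ≠ ⊤) (hf : ∀ᵐ x ∂μ.restrict s, c ≤ f x)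
    (hint : IntegrableOn f s μ) : c * μ.real s ≤ ∫ x in s, f x ∂μ :=
  calc c * μ.real s = ∫ _ in s, c ∂μ := by rw [setIntegral_const, smul_eq_mul, mul_comm]
    _ ≤ ∫ x in s, f x ∂μ := integral_mono_ae (integrableOn_const hμs) hint hf

theorem not_integrableOn_of_le_setIntegral_norm {α E : Type*} [MeasurableSpace α]
    {μ : Measure α} [NormedAddCommGroup E] {f : α → E} {s : ℕ → Set α} {t : Set α} {ε : ℝ}
    (hε : 0 < ε) (hs : ∀ k, MeasurableSet (s k)) (hdisj : Pairwise (Disjoint on s))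
    (hst : ∀ k, s k ⊆ t) (hle : ∀ k, ε ≤ ∫ x in s k, ‖f x‖ ∂μ) : ¬IntegrableOn f t μ := by
  intro hf
  have hsum :=
    (hasSum_integral_iUnion hs hdisj (IntegrableOn.mono_set hf.norm (iUnion_subset hst))).summable
  obtain ⟨k, hk⟩ := (hsum.tendsto_atTop_zero.eventually (gt_mem_nhds hε)).exists
  exact (hle k).not_gt hk

theorem exists_mem_Ioo_ae_restrict_Ico_eq_zero {c d : ℝ} (hcd : c < d) {f : ℝ → ℝ}
    (hf : ∀ᶠ x in 𝓝[<] d, f x = 0) : ∃ b ∈ Ioo c d, ∀ᵐ x ∂volume.restrict (Ico b d), f x = 0 := by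
  obtain ⟨l, hl, hlf⟩ := mem_nhdsLT_iff_exists_Ioo_subset.1 hf
  refine ⟨max l ((c + d) / 2), ⟨lt_max_of_lt_right (by linarith), max_lt hl (by linarith)⟩, ?_⟩
  rw [ae_restrict_congr_set Ioo_ae_eq_Ico.symm]
  exact ae_restrict_of_forall_mem measurableSet_Ioo fun x hx =>
    hlf ⟨(le_max_left _ _).trans_lt hx.1, hx.2⟩

theorem exists_Ioc_le_abs_and_setIntegral_le {x₀ d : ℝ} (hx₀ : x₀ < d) {u g : ℝ → ℝ}
    (hu : IntegrableOn u (Ioo x₀ d)) (hg : ContinuousAt g x₀) (hg₀ : g x₀ ≠ 0) :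
    ∃ ε > 0, ∀ δ > 0, ∃ b ∈ Ioo x₀ d,
      (∀ x ∈ Ioc x₀ b, ε ≤ |g x|) ∧ ∫ x in Ioc x₀ b, u x ≤ δ := by
  refine ⟨|g x₀| / 2, half_pos (abs_pos.2 hg₀), fun δ hδ => ?_⟩
  obtain ⟨l, r, ⟨hl, hr⟩, hlr⟩ :=
    (hg.abs.eventually (eventually_ge_nhds (half_lt_self (abs_pos.2 hg₀)))).exists_Ioo_subset
  have hμ : Tendsto (fun b => volume.restrict (Ioo x₀ d) (Ioc x₀ b)) (𝓝[>] x₀) (𝓝 0) := by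
    refine tendsto_of_tendsto_of_tendsto_of_le_of_le tendsto_const_nhds ?_ (fun _ => bot_le)
      fun b => Measure.restrict_apply_le _ _
    simp only [Real.volume_Ioc]
    have h0 : Tendsto (fun b => b - x₀) (𝓝[>] x₀) (𝓝 0) := by
      simpa using tendsto_nhdsWithin_of_tendsto_nhds ((continuous_sub_right x₀).tendsto x₀)
    simpa using ENNReal.tendsto_ofReal h0
  have hsmall := (hu.tendsto_setIntegral_nhds_zero hμ).eventually (eventually_le_nhds hδ)
  obtain ⟨b, hbδ, hb⟩ := (hsmall.and (Ioo_mem_nhdsGT (lt_min hr hx₀))).exists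
  have hbd : b < d := hb.2.trans_le (min_le_right _ _)
  refine ⟨b, ⟨hb.1, hbd⟩, fun x hx =>
    hlr ⟨hl.trans hx.1, hx.2.trans_lt (hb.2.trans_le (min_le_left _ _))⟩, ?_⟩
  rwa [Measure.restrict_restrict measurableSet_Ioc,
    inter_eq_left.2 (Ioc_subset_Ioo_right hbd)] at hbδ

theorem exists_seq_Ioc_tendsto {c d : ℝ} (hcd : c < d) {P : ℕ → ℝ → ℝ → Prop}
    (hP : ∀ k, ∀ s ∈ Ico c d, ∃ a b, s < a ∧ a < b ∧ b < d ∧ P k a b) :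
    ∃ a b : ℕ → ℝ, (∀ k, c < a k) ∧ (∀ k, a k < b k) ∧ (∀ k, b k < a (k + 1)) ∧
      (∀ k, b k < d) ∧ Tendsto a atTop (𝓝 d) ∧ ∀ k, P k (a k) (b k) := by
  choose A B hsA hAB hBd hABP using hP
  -- restarting each step from the midpoint of `(bₖ, d)` at least halves the distance to `d`
  obtain ⟨s, hs0, hsucc⟩ : ∃ s : ℕ → Ico c d, (s 0 : ℝ) = c ∧
      ∀ k, (s (k + 1) : ℝ) = (B k (s k) (s k).2 + d) / 2 :=
    ⟨fun n => Nat.rec ⟨c, left_mem_Ico.2 hcd⟩ (fun k t => ⟨(B k t t.2 + d) / 2,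
      by linarith [t.2.1, hsA k t t.2, hAB k t t.2, hBd k t t.2], by linarith [hBd k t t.2]⟩) n,
      rfl, fun _ => rfl⟩
  set a := fun k => A k (s k) (s k).2
  set b := fun k => B k (s k) (s k).2
  have hsa : ∀ k, (s k : ℝ) < a k := fun k => hsA k _ _
  have hab : ∀ k, a k < b k := fun k => hAB k _ _
  have hbd : ∀ k, b k < d := fun k => hBd k _ _
  have hgap : ∀ k, d - s k ≤ (d - c) * (1 / 2) ^ k := by
    intro k
    induction k with
    | zero => simp [hs0]
    | succ k ih => rw [hsucc, pow_succ]; linarith [hsa k, hab k]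
  have hlow : Tendsto (fun k => d - (d - c) * (1 / 2 : ℝ) ^ k) atTop (𝓝 d) := by
    simpa using tendsto_const_nhds.sub ((tendsto_pow_atTop_nhds_zero_of_lt_one
      (by norm_num : (0 : ℝ) ≤ 1 / 2) (by norm_num)).const_mul (d - c))
  refine ⟨a, b, fun k => (s k).2.1.trans_lt (hsa k), hab, fun k => ?_, hbd,
    tendsto_of_tendsto_of_tendsto_of_le_of_le hlow tendsto_const_nhds
      (fun k => by linarith [hgap k, hsa k]) fun k => (hab k).le.trans (hbd k).le,
    fun k => hABP k _ _⟩
  have := hsa (k + 1)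
  rw [hsucc] at this
  linarith [hbd k]

noncomputable def zigzag (a b h : ℝ) : ℝ → ℝ :=
  (Ioc a ((a + b) / 2)).indicator (fun _ => h) - (Ioc ((a + b) / 2) b).indicator (fun _ => h)

noncomputable def tent (a b h x : ℝ) : ℝ :=
  h * (max (min x ((a + b) / 2) - a) 0 - max (min x b - (a + b) / 2) 0)

section Zigzag

variable {a b h x : ℝ}

theorem zigzag_eq_zero (hx : x ∉ Ioc a b) : zigzag a b h x = 0 := by
  simp only [zigzag, Pi.sub_apply, indicator_apply, mem_Ioc] at hx ⊢
  split_ifs <;> grind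

theorem abs_zigzag (hx : x ∈ Ioc a b) : |zigzag a b h x| = |h| := by
  simp only [zigzag, Pi.sub_apply, indicator_apply, mem_Ioc] at hx ⊢
  split_ifs <;> grind

theorem measurable_zigzag : Measurable (zigzag a b h) :=
  (measurable_const.indicator measurableSet_Ioc).sub (measurable_const.indicator measurableSet_Ioc)

theorem integrable_zigzag : Integrable (zigzag a b h) :=
  ((integrableOn_const measure_Ioc_lt_top.ne).integrable_indicator measurableSet_Ioc).sub
    ((integrableOn_const measure_Ioc_lt_top.ne).integrable_indicator measurableSet_Ioc)

theorem setIntegral_Ioc_zigzag {c : ℝ} (hca : c ≤ a) (hab : a ≤ b) (x : ℝ) :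
    ∫ t in Ioc c x, zigzag a b h t = tent a b h x := by
  have hlen : ∀ u v, a ≤ u → ∫ t in Ioc c x, (Ioc u v).indicator (fun _ => h) t
      = h * max (min x v - u) 0 := fun u v hu => by
    rw [setIntegral_indicator measurableSet_Ioc, setIntegral_const, Ioc_inter_Ioc,
      Real.volume_real_Ioc, sup_eq_right.2 (hca.trans hu), min_comm, smul_eq_mul, mul_comm]
  have hint : ∀ u v, IntegrableOn ((Ioc u v).indicator fun _ => h) (Ioc c x) := fun u v =>
    ((integrableOn_const measure_Ioc_lt_top.ne).integrable_indicator measurableSet_Ioc).integrableOn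
  simp only [zigzag, Pi.sub_apply]
  rw [integral_sub (hint _ _) (hint _ _), hlen _ _ le_rfl, hlen _ _ (by linarith), tent, mul_sub]

theorem continuous_tent : Continuous (tent a b h) := by
  unfold tent; fun_prop

theorem tent_eq_zero (hab : a ≤ b) (hx : x ∉ Ioo a b) : tent a b h x = 0 := by
  rw [mem_Ioo, not_and_or, not_lt, not_lt] at hx
  rcases hx with hx | hx
  · rw [tent, min_eq_left (by linarith), min_eq_left (by linarith), max_eq_right (by linarith),
      max_eq_right (by linarith)]
    ring
  · rw [tent, min_eq_right (by linarith), min_eq_right hx, max_eq_left (by linarith),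
      max_eq_left (by linarith)]
    ring

theorem abs_tent_le (hab : a ≤ b) : |tent a b h x| ≤ |h| * (b - a) := by
  have hleft : max (min x ((a + b) / 2) - a) 0 ≤ (b - a) / 2 :=
    max_le (by linarith [min_le_right x ((a + b) / 2)]) (by linarith)
  have hright : max (min x b - (a + b) / 2) 0 ≤ (b - a) / 2 :=
    max_le (by linarith [min_le_right x b]) (by linarith)
  rw [tent, abs_mul]
  gcongr
  rw [abs_le]
  constructor <;> linarith [le_max_right (min x ((a + b) / 2) - a) 0,
    le_max_right (min x b - (a + b) / 2) 0]

end Zigzag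

theorem integrableOn_and_setIntegral_Ioc_tsum_zigzag {c x : ℝ} {a b h : ℕ → ℝ}
    (hca : ∀ k, c ≤ a k) (hab : ∀ k, a k ≤ b k) (hx : ∀ᶠ k in atTop, x ≤ a k) :
    IntegrableOn (fun t => ∑' k, zigzag (a k) (b k) (h k) t) (Ioc c x) ∧
      ∫ t in Ioc c x, ∑' k, zigzag (a k) (b k) (h k) t = ∑' k, tent (a k) (b k) (h k) x := by
  obtain ⟨N, hN⟩ := eventually_atTop.1 hx
  have hle : ∀ k ∉ Finset.range N, x ≤ a k := fun k hk => hN k (by simpa using hk)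
  have hfin : EqOn (fun t => ∑' k, zigzag (a k) (b k) (h k) t)
      (fun t => ∑ k ∈ Finset.range N, zigzag (a k) (b k) (h k) t) (Ioc c x) := fun t ht =>
    tsum_eq_sum fun k hk => zigzag_eq_zero fun htk => (hle k hk).not_gt (htk.1.trans_le ht.2)
  have hint : ∀ k, IntegrableOn (zigzag (a k) (b k) (h k)) (Ioc c x) := fun k =>
    integrable_zigzag.integrableOn
  refine ⟨IntegrableOn.congr_fun (integrable_finsetSum _ fun k _ => hint k) hfin.symm
    measurableSet_Ioc, ?_⟩
  rw [setIntegral_congr_fun measurableSet_Ioc hfin, integral_finsetSum _ fun k _ => hint k,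
    tsum_eq_sum fun k hk => tent_eq_zero (hab k) fun hxk => (hle k hk).not_gt hxk.1]
  exact Finset.sum_congr rfl fun k _ => setIntegral_Ioc_zigzag (hca k) (hab k) x

theorem integrable_abs_mul_tsum_tent_rpow {p : ℝ} (hp : 0 < p) {w : ℝ → ℝ} (hw : Measurable w)
    {a b h : ℕ → ℝ} (hab : ∀ k, a k ≤ b k) (hba : ∀ k, b k ≤ a (k + 1))
    (hwk : ∀ k, IntegrableOn (fun x => |w x| ^ p) (Ioc (a k) (b k)))
    (hsum : Summable fun k => (|h k| * (b k - a k)) ^ p * ∫ x in Ioc (a k) (b k), |w x| ^ p) :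
    Integrable fun x => |w x * ∑' k, tent (a k) (b k) (h k) x| ^ p := by
  set F := fun x => ∑' k, tent (a k) (b k) (h k) x
  have hdisj := pairwise_disjoint_Ioc_of_forall_le hab hba
  have htent : ∀ k, ∀ x ∉ Ioc (a k) (b k), tent (a k) (b k) (h k) x = 0 := fun k x hx =>
    tent_eq_zero (hab k) fun hx' => hx (Ioo_subset_Ioc_self hx')
  have hmeas : Measurable fun x => |w x * F x| ^ p :=
    ((hw.mul (measurable_tsum_of_pairwise_disjoint hdisj htent
      fun k => continuous_tent.measurable)).abs).pow_const p
  have hbound : ∀ k, ∀ x ∈ Ioc (a k) (b k),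
      ‖|w x * F x| ^ p‖ ≤ (|h k| * (b k - a k)) ^ p * |w x| ^ p := by
    intro k x hx
    rw [Real.norm_of_nonneg (by positivity),
      show F x = _ from tsum_eq_of_pairwise_disjoint_of_mem hdisj htent hx, abs_mul,
      Real.mul_rpow (abs_nonneg _) (abs_nonneg _), mul_comm]
    gcongr
    exact abs_tent_le (hab k)
  have hpiece : ∀ k, IntegrableOn (fun x => |w x * F x| ^ p) (Ioc (a k) (b k)) := fun k =>
    ((hwk k).const_mul _).mono' hmeas.aestronglyMeasurable
      ((ae_restrict_iff' measurableSet_Ioc).2 (ae_of_all _ (hbound k)))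
  have hunion : IntegrableOn (fun x => |w x * F x| ^ p) (⋃ k, Ioc (a k) (b k)) := by
    refine integrableOn_iUnion_of_summable_integral_norm hpiece (hsum.of_nonneg_of_le
      (fun k => integral_nonneg fun x => norm_nonneg _) fun k => ?_)
    rw [← integral_const_mul]
    exact setIntegral_mono_on (hpiece k).norm ((hwk k).const_mul _) measurableSet_Ioc (hbound k)
  refine integrableOn_univ.1 (hunion.of_forall_sdiff_eq_zero MeasurableSet.univ fun x hx => ?_)
  have hFx : F x = 0 := by
    simp only [Set.mem_sdiff, mem_univ, mem_iUnion, not_exists, true_and] at hx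
    exact (tsum_congr fun k => htent k x (hx k)).trans tsum_zero
  simp [hFx, Real.zero_rpow hp.ne']

theorem memCh_tsum_zigzag {c d p : ℝ} (hp : 0 < p) {w : ℝ → ℝ} (hw : Measurable w)
    {a b h : ℕ → ℝ} (hca : ∀ k, c ≤ a k) (hab : ∀ k, a k ≤ b k) (hba : ∀ k, b k ≤ a (k + 1))
    (ha : Tendsto a atTop (𝓝 d))
    (hwk : ∀ k, IntegrableOn (fun x => |w x| ^ p) (Ioc (a k) (b k)))
    (hsum : Summable fun k => (|h k| * (b k - a k)) ^ p * ∫ x in Ioc (a k) (b k), |w x| ^ p) :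
    memCh c d p w fun x => ∑' k, zigzag (a k) (b k) (h k) x := by
  have hprim := fun x (hx : x ∈ Ioo c d) => integrableOn_and_setIntegral_Ioc_tsum_zigzag
    (h := h) hca hab (ha.eventually (eventually_ge_nhds hx.2))
  refine ⟨measurable_tsum_of_pairwise_disjoint (pairwise_disjoint_Ioc_of_forall_le hab hba)
    (fun k x hx => zigzag_eq_zero hx) fun k => measurable_zigzag, fun x hx => (hprim x hx).1, ?_⟩
  refine (integrable_abs_mul_tsum_tent_rpow hp hw hab hba hwk hsum).integrableOn.congr_fun
    (fun x hx => ?_) measurableSet_Ioo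
  rw [(hprim x hx).2]

theorem mul_le_setIntegral_norm_tsum_zigzag_mul {a b h : ℕ → ℝ} {g : ℝ → ℝ} {ε : ℝ}
    (hab : ∀ k, a k ≤ b k) (hba : ∀ k, b k ≤ a (k + 1)) {k : ℕ}
    (hg : ∀ᵐ x ∂volume.restrict (Ioc (a k) (b k)), ε ≤ |g x|)
    (hint : IntegrableOn (fun x => (∑' j, zigzag (a j) (b j) (h j) x) * g x) (Ioc (a k) (b k))) :
    |h k| * ε * (b k - a k) ≤
      ∫ x in Ioc (a k) (b k), ‖(∑' j, zigzag (a j) (b j) (h j) x) * g x‖ := by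
  rw [← Real.volume_real_Ioc_of_le (hab k)]
  refine mul_measureReal_le_setIntegral_of_ae_le measure_Ioc_lt_top.ne ?_ hint.norm
  filter_upwards [hg, ae_restrict_mem measurableSet_Ioc] with x hgx hx
  rw [norm_mul, Real.norm_eq_abs, Real.norm_eq_abs, tsum_eq_of_pairwise_disjoint_of_mem
    (pairwise_disjoint_Ioc_of_forall_le hab hba) (fun j x hx => zigzag_eq_zero hx) hx,
    abs_zigzag hx]
  gcongr

theorem exists_Ioc_of_frequently_ne_zero {c d p δ : ℝ} {u g : ℝ → ℝ}
    (hu : ∀ x ∈ Ioo c d, IntegrableOn u (Ioo x d)) (hg : ContinuousOn g (Ioo c d))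
    (hne : ∃ᶠ x in 𝓝[<] d, g x ≠ 0) {s : ℝ} (hs : s ∈ Ico c d) (hδ : 0 < δ) :
    ∃ a b, s < a ∧ a < b ∧ b < d ∧
      ∃ ε > 0, (∀ x ∈ Ioc a b, ε ≤ |g x|) ∧ ε⁻¹ ^ p * ∫ x in Ioc a b, u x ≤ δ := by
  obtain ⟨x₀, hgx₀, hx₀⟩ := (hne.and_eventually (Ioo_mem_nhdsLT hs.2)).exists
  have hx₀cd : x₀ ∈ Ioo c d := ⟨hs.1.trans_lt hx₀.1, hx₀.2⟩
  obtain ⟨ε, hε, hgood⟩ := exists_Ioc_le_abs_and_setIntegral_le hx₀.2 (hu x₀ hx₀cd)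
    (hg.continuousAt (isOpen_Ioo.mem_nhds hx₀cd)) hgx₀
  have hεp : 0 < ε⁻¹ ^ p := by positivity
  obtain ⟨b, hb, hgb, hub⟩ := hgood (δ / ε⁻¹ ^ p) (by positivity)
  refine ⟨x₀, b, hx₀.1, hb.1, hb.2, ε, hε, hgb, ?_⟩
  calc ε⁻¹ ^ p * ∫ x in Ioc x₀ b, u x ≤ ε⁻¹ ^ p * (δ / ε⁻¹ ^ p) := by gcongr
    _ = δ := mul_div_cancel₀ δ hεp.ne'

theorem exists_memCh_not_integrableOn_mul {c d p : ℝ} (hcd : c < d) (hp : 0 < p) {w gt : ℝ → ℝ}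
    (hw : Measurable w) (hu : ∀ x ∈ Ioo c d, IntegrableOn (fun t => |w t| ^ p) (Ioo x d))
    (hgt : ContinuousOn gt (Ioo c d)) (hne : ∃ᶠ x in 𝓝[<] d, gt x ≠ 0) :
    ∃ f, memCh c d p w f ∧ ∀ g : ℝ → ℝ, (∀ᵐ x ∂volume.restrict (Ioo c d), g x = gt x) →
      ¬IntegrableOn (fun x => f x * g x) (Ioo c d) := by
  obtain ⟨a, b, hca, hab, hba, hbd, ha, hgood⟩ := exists_seq_Ioc_tendsto hcd fun k s hs =>
    exists_Ioc_of_frequently_ne_zero (p := p) hu hgt hne hs (pow_pos one_half_pos k)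
  choose ε hε hgε hεu using hgood
  have hab' : ∀ k, a k ≤ b k := fun k => (hab k).le
  have hba' : ∀ k, b k ≤ a (k + 1) := fun k => (hba k).le
  have hsub : ∀ k, Ioc (a k) (b k) ⊆ Ioo c d := fun k =>
    (Ioc_subset_Ioo_right (hbd k)).trans (Ioo_subset_Ioo_left (hca k).le)
  set h := fun k => (ε k)⁻¹ / (b k - a k)
  have hh : ∀ k, |h k| * (b k - a k) = (ε k)⁻¹ := fun k => by
    have := sub_pos.2 (hab k)
    rw [abs_of_pos (div_pos (inv_pos.2 (hε k)) this), div_mul_cancel₀ _ this.ne']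
  have hsum : Summable fun k => (|h k| * (b k - a k)) ^ p * ∫ x in Ioc (a k) (b k), |w x| ^ p := by
    refine summable_geometric_two.of_nonneg_of_le (fun k => ?_) fun k => hh k ▸ hεu k
    rw [hh]
    exact mul_nonneg (by have := hε k; positivity)
      (setIntegral_nonneg measurableSet_Ioc fun _ _ => by positivity)
  refine ⟨_, memCh_tsum_zigzag (h := h) hp hw (fun k => (hca k).le) hab' hba' ha
    (fun k => (hu (a k) ⟨hca k, (hab k).trans (hbd k)⟩).mono_set (Ioc_subset_Ioo_right (hbd k)))
    hsum, fun g hg hfg => ?_⟩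
  refine not_integrableOn_of_le_setIntegral_norm one_pos (fun k => measurableSet_Ioc)
    (pairwise_disjoint_Ioc_of_forall_le hab' hba') hsub (fun k => ?_) hfg
  have hgk : ∀ᵐ x ∂volume.restrict (Ioc (a k) (b k)), ε k ≤ |g x| := by
    filter_upwards [ae_restrict_of_ae_restrict_of_subset (hsub k) hg,
      ae_restrict_mem measurableSet_Ioc] with x hgx hx
    exact hgx ▸ hgε k x hx
  calc (1 : ℝ) = |h k| * ε k * (b k - a k) := by rw [mul_right_comm, hh, inv_mul_cancel₀ (hε k).ne']
    _ ≤ _ := mul_le_setIntegral_norm_tsum_zigzag_mul hab' hba' hgk (hfg.mono_set (hsub k))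

theorem stmt9_general (c d p : ℝ) (hcd : c < d) (hp : 1 < p)
    (w : ℝ → ℝ) (hwm : Measurable w)
    (hwpos : ∀ x ∈ Ioo c d, 0 < w x)
    (hwint : ∀ x ∈ Ioo c d, IntegrableOn (fun t => w t ^ p) (Ioo x d))
    (g gt : ℝ → ℝ)
    (hgtc : ContinuousOn gt (Ioo c d))
    (hrep : ∀ᵐ x ∂(volume.restrict (Ioo c d)), g x = gt x)
    (C : ℝ)
    (hC : ∀ f : ℝ → ℝ, memCh c d p w f →
      IntegrableOn (fun x => f x * g x) (Ioo c d) ∧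
      |∫ x in Ioo c d, f x * g x| ≤ C * chNorm c d p w f) :
    ∃ b ∈ Ioo c d, ∀ᵐ x ∂(volume.restrict (Ico b d)), gt x = 0 := by
  by_contra hcon
  have hne : ∃ᶠ x in 𝓝[<] d, gt x ≠ 0 := fun hev =>
    hcon (exists_mem_Ioo_ae_restrict_Ico_eq_zero hcd (hev.mono fun _ => not_not.1))
  have hu : ∀ x ∈ Ioo c d, IntegrableOn (fun t => |w t| ^ p) (Ioo x d) := fun x hx =>
    (hwint x hx).congr_fun (fun t ht => by rw [abs_of_pos (hwpos t ⟨hx.1.trans ht.1, ht.2⟩)])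
      measurableSet_Ioo
  obtain ⟨f, hf, hfg⟩ := exists_memCh_not_integrableOn_mul hcd (by linarith) hwm hu hgtc hne
  exact hfg g hrep (hC f hf).1

theorem stmt9 (c d p : ℝ) (hcd : c < d) (hp : 1 < p)
    (w : ℝ → ℝ) (hwm : Measurable w)
    (hwpos : ∀ x ∈ Ioo c d, 0 < w x)
    (hwint : ∀ x ∈ Ioo c d, IntegrableOn (fun t => w t ^ p) (Ioo x d))
    (g gt : ℝ → ℝ) (hgm : Measurable g)
    (hgtc : ContinuousOn gt (Ioo c d))
    (hrep : ∀ᵐ x ∂(volume.restrict (Ioo c d)), g x = gt x)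
    (C : ℝ)
    (hC : ∀ f : ℝ → ℝ, memCh c d p w f →
      IntegrableOn (fun x => f x * g x) (Ioo c d) ∧
      |∫ x in Ioo c d, f x * g x| ≤ C * chNorm c d p w f) :
    ∃ b ∈ Ioo c d, ∀ᵐ x ∂(volume.restrict (Ico b d)), gt x = 0 :=
  stmt9_general c d p hcd hp w hwm hwpos hwint g gt hgtc hrep C hC
end
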